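/- arXiv:1409.4157 — 5 statements merged into one kernel-verified Lean document; each statement's English description precedes it below -/
import Mathlib

section
/- Divisibility of a-equivalence classes of words is a partial order on the set of a-equivalence classes of nonempty words of length divisible by a. -/
/-- One step of cyclic permutation of blocks of `a` letters (the relation `~_a`). -/
def BlockCyc (n a : ℕ) (w w' : List (Fin n)) : Prop :=
  ∃ u v : List (Fin n), a ∣ u.length ∧ a ∣ v.length ∧ w = u ++ v ∧ w' = v ++ u

/-- The `e`-fold concatenation power `w^e` of a word. -/
def wpow {n : ℕ} (w : List (Fin n)) (e : ℕ) : List (Fin n) :=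
  (List.replicate e w).flatten

lemma wpow_zero {n : ℕ} (w : List (Fin n)) : wpow w 0 = [] := rfl

lemma wpow_succ {n : ℕ} (w : List (Fin n)) (e : ℕ) :
    wpow w (e + 1) = w ++ wpow w e := by
  simp [wpow, List.replicate_succ]

lemma wpow_one {n : ℕ} (w : List (Fin n)) : wpow w 1 = w := by
  simp [wpow]

lemma wpow_add {n : ℕ} (w : List (Fin n)) (e f : ℕ) :
    wpow w (e + f) = wpow w e ++ wpow w f := by
  induction e with
  | zero => simp [wpow_zero]
  | succ e ih =>
      have : e + 1 + f = (e + f) + 1 := by omega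
      rw [this, wpow_succ, wpow_succ, ih, List.append_assoc]

lemma wpow_mul {n : ℕ} (w : List (Fin n)) (e f : ℕ) :
    wpow w (e * f) = wpow (wpow w e) f := by
  induction f with
  | zero => simp [wpow_zero]
  | succ f ih =>
      rw [wpow_succ, Nat.mul_succ, Nat.add_comm, wpow_add, ih]

lemma length_wpow {n : ℕ} (w : List (Fin n)) (e : ℕ) :
    (wpow w e).length = e * w.length := by
  induction e with
  | zero => simp [wpow_zero]
  | succ e ih => rw [wpow_succ]; simp [ih, Nat.succ_mul, Nat.add_comm]

/-- `[w₁]` divides `[w₂]` (as `a`-equivalence classes): some representatives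
`u₁ ~_a w₁` and `u₂ ~_a w₂` satisfy `u₂ = u₁^e` with `e` positive. -/
def ClassDvd (n a : ℕ) (w₁ w₂ : List (Fin n)) : Prop :=
  ∃ (u₁ u₂ : List (Fin n)) (e : ℕ), 0 < e ∧
    BlockCyc n a u₁ w₁ ∧ BlockCyc n a u₂ w₂ ∧ u₂ = wpow u₁ e

lemma bc_refl (n a : ℕ) (w : List (Fin n)) (h : a ∣ w.length) :
    BlockCyc n a w w :=
  ⟨w, [], h, by simp, by simp, by simp⟩

lemma bc_symm {n a : ℕ} {w w' : List (Fin n)} (h : BlockCyc n a w w') :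
    BlockCyc n a w' w := by
  obtain ⟨u, v, hu, hv, h1, h2⟩ := h
  exact ⟨v, u, hv, hu, h2, h1⟩

lemma bc_length {n a : ℕ} {w w' : List (Fin n)} (h : BlockCyc n a w w') :
    w.length = w'.length ∧ a ∣ w.length := by
  obtain ⟨u, v, hu, hv, h1, h2⟩ := h
  subst h1 h2
  constructor
  · simp [Nat.add_comm]
  · simp [Nat.dvd_add hu hv]

/-- Characterization of `BlockCyc` via rotation. -/
lemma bc_iff_rotate {n a : ℕ} {w w' : List (Fin n)} :
    BlockCyc n a w w' ↔ a ∣ w.length ∧ ∃ k, a ∣ k ∧ w' = w.rotate k := by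
  constructor
  · rintro ⟨u, v, hu, hv, rfl, rfl⟩
    refine ⟨by simp [Nat.dvd_add hu hv], u.length, hu, ?_⟩
    rw [List.rotate_eq_drop_append_take (by simp)]
    simp
  · rintro ⟨hw, k, hk, rfl⟩
    rcases Nat.eq_zero_or_pos w.length with hlen | hlen
    · rw [List.length_eq_zero_iff] at hlen
      subst hlen
      exact ⟨[], [], by simp, by simp, by simp, by simp⟩
    · set k' := k % w.length with hk'
      have hle : k' ≤ w.length := le_of_lt (Nat.mod_lt _ hlen)
      have hak' : a ∣ k' := (Nat.dvd_mod_iff hw).mpr hk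
      refine ⟨w.take k', w.drop k', ?_, ?_, (w.take_append_drop k').symm, ?_⟩
      · simpa [Nat.min_eq_left hle] using hak'
      · have : (w.drop k').length = w.length - k' := by simp
        rw [this]
        exact Nat.dvd_sub hw hak'
      · rw [← List.rotate_mod, ← hk', List.rotate_eq_drop_append_take hle]

lemma bc_trans {n a : ℕ} {w w' w'' : List (Fin n)}
    (h1 : BlockCyc n a w w') (h2 : BlockCyc n a w' w'') :
    BlockCyc n a w w'' := by
  rw [bc_iff_rotate] at h1 h2 ⊢
  obtain ⟨hw, k, hk, rfl⟩ := h1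
  obtain ⟨-, k', hk', rfl⟩ := h2
  exact ⟨hw, k + k', Nat.dvd_add hk hk', w.rotate_rotate k k'⟩

/-- Powers of `~_a`-equivalent words are `~_a`-equivalent. -/
lemma bc_pow {n a : ℕ} {u v : List (Fin n)} (h : BlockCyc n a u v) (e : ℕ) :
    BlockCyc n a (wpow u e) (wpow v e) := by
  obtain ⟨x, y, hx, hy, rfl, rfl⟩ := h
  -- key identity: (x++y)^e ++ x = x ++ (y++x)^e
  have key : ∀ m : ℕ, wpow (x ++ y) m ++ x = x ++ wpow (y ++ x) m := by
    intro m
    induction m with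
    | zero => simp [wpow_zero]
    | succ m ih =>
        rw [wpow_succ, wpow_succ]
        calc (x ++ y) ++ wpow (x ++ y) m ++ x
            = x ++ (y ++ (wpow (x ++ y) m ++ x)) := by simp
          _ = x ++ (y ++ (x ++ wpow (y ++ x) m)) := by rw [ih]
          _ = x ++ ((y ++ x) ++ wpow (y ++ x) m) := by simp
  cases e with
  | zero => exact ⟨[], [], by simp, by simp, by simp [wpow_zero], by simp [wpow_zero]⟩
  | succ e =>
      refine ⟨x, y ++ wpow (x ++ y) e, hx, ?_, ?_, ?_⟩
      · simp [length_wpow]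
        exact Nat.dvd_add hy (Dvd.dvd.mul_left (Nat.dvd_add hx hy) e)
      · rw [wpow_succ]; simp
      · rw [wpow_succ]
        symm
        calc (y ++ wpow (x ++ y) e) ++ x = y ++ (wpow (x ++ y) e ++ x) := by simp
          _ = y ++ (x ++ wpow (y ++ x) e) := by rw [key]
          _ = (y ++ x) ++ wpow (y ++ x) e := by simp

/-- divisibility of `a`-equivalence classes is a partial order on
the set of `a`-equivalence classes of nonempty words of length divisible by
`a`: it is reflexive, transitive, and antisymmetric (antisymmetry meaning that
two classes dividing each other are equal, i.e. the representatives are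
`~_a`-equivalent). -/
theorem stmt2 (n a : ℕ) (ha : 0 < a) :
    (∀ w : List (Fin n), w ≠ [] → a ∣ w.length → ClassDvd n a w w) ∧
    (∀ w₁ w₂ w₃ : List (Fin n),
      w₁ ≠ [] → a ∣ w₁.length → w₂ ≠ [] → a ∣ w₂.length → w₃ ≠ [] → a ∣ w₃.length →
      ClassDvd n a w₁ w₂ → ClassDvd n a w₂ w₃ → ClassDvd n a w₁ w₃) ∧
    (∀ w₁ w₂ : List (Fin n),
      w₁ ≠ [] → a ∣ w₁.length → w₂ ≠ [] → a ∣ w₂.length →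
      ClassDvd n a w₁ w₂ → ClassDvd n a w₂ w₁ → BlockCyc n a w₁ w₂) := by
  refine ⟨?_, ?_, ?_⟩
  · -- reflexivity
    intro w _ hdvd
    exact ⟨w, w, 1, one_pos, bc_refl n a w hdvd, bc_refl n a w hdvd, (wpow_one w).symm⟩
  · -- transitivity
    rintro w₁ w₂ w₃ _ _ _ _ _ _
      ⟨u₁, u₂, e, he, hu₁, hu₂, rfl⟩ ⟨v₂, v₃, f, hf, hv₂, hv₃, rfl⟩
    refine ⟨u₁, wpow u₁ (e * f), e * f, Nat.mul_pos he hf, hu₁, ?_, rfl⟩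
    -- wpow u₁ e ~ v₂, so wpow u₁ (e*f) = (wpow u₁ e)^f ~ v₂^f ~ w₃
    have h1 : BlockCyc n a (wpow u₁ e) v₂ := bc_trans hu₂ (bc_symm hv₂)
    have h2 : BlockCyc n a (wpow (wpow u₁ e) f) (wpow v₂ f) := bc_pow h1 f
    rw [← wpow_mul] at h2
    exact bc_trans h2 hv₃
  · -- antisymmetry
    rintro w₁ w₂ hne₁ _ hne₂ _
      ⟨u₁, u₂, e, he, hu₁, hu₂, rfl⟩ ⟨v₂, v₁, f, hf, hv₂, hv₁, rfl⟩
    have l1 := bc_length hu₁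
    have l2 := bc_length hu₂
    have l3 := bc_length hv₂
    have l4 := bc_length hv₁
    rw [length_wpow] at l2 l4
    have hpos : 0 < w₁.length := List.length_pos_iff.mpr hne₁
    have : e * f = 1 := by nlinarith [l1.1, l2.1, l3.1, l4.1, hpos]
    have he1 : e = 1 := Nat.eq_one_of_mul_eq_one_right this
    subst he1
    rw [wpow_one] at hu₂
    exact bc_trans (bc_symm hu₁) hu₂
end

section
/- For a nonempty word w of length divisible by a, there is a unique maximal e such that the a-equivalence class [w] is divisible by the class of a word w' with w = (w')^e; moreover e divides the length of w. -/
/-- for a nonempty word `w` of length divisible by `a` there is a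
unique maximal `e` such that `[w]` is the `e`-th power of the class of some
word `w'` of length divisible by `a` (i.e. `w ~_a (w')^e`); moreover this `e`
divides the length of `w`. -/
theorem stmt3 (n a : ℕ) (ha : 0 < a) (w : List (Fin n)) (hw : w ≠ [])
    (hl : a ∣ w.length) :
    ∃! e : ℕ,
      (0 < e ∧ (∃ w' : List (Fin n), a ∣ w'.length ∧ BlockCyc n a w (wpow w' e)) ∧
        ∀ f : ℕ, 0 < f →
          (∃ w' : List (Fin n), a ∣ w'.length ∧ BlockCyc n a w (wpow w' f)) → f ≤ e) ∧
      e ∣ w.length := by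
  classical
  set P : ℕ → Prop := fun f =>
    0 < f ∧ ∃ w' : List (Fin n), a ∣ w'.length ∧ BlockCyc n a w (wpow w' f) with hPdef
  have hlen : ∀ f, ∀ w' : List (Fin n), BlockCyc n a w (wpow w' f) →
      w.length = f * w'.length := by
    rintro f w' ⟨u, v, _, _, h1, h2⟩
    have h3 : w.length = (wpow w' f).length := by
      rw [h1, h2]; simp [Nat.add_comm]
    simpa [wpow] using h3
  have hbound : ∀ f, P f → f ≤ w.length := by
    rintro f ⟨hf, w', _, hb⟩
    have h := hlen f w' hb
    have hwpos : 0 < w.length := List.length_pos_iff.mpr hw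
    have hw' : 0 < w'.length := by
      rcases Nat.eq_zero_or_pos w'.length with h0 | h0
      · rw [h0, Nat.mul_zero] at h; omega
      · exact h0
    calc f = f * 1 := (Nat.mul_one f).symm
      _ ≤ f * w'.length := Nat.mul_le_mul_left f hw'
      _ = w.length := h.symm
  have hP1 : P 1 := by
    refine ⟨one_pos, w, hl, [], w, ⟨0, rfl⟩, hl, by simp, ?_⟩
    simp [wpow]
  set e := Nat.findGreatest P w.length with he
  have hPe : P e := Nat.findGreatest_spec (hbound 1 hP1) hP1
  have hmax : ∀ f, P f → f ≤ e := fun f hf => Nat.le_findGreatest (hbound f hf) hf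
  obtain ⟨hepos, w', hw'div, hbc⟩ := hPe
  refine ⟨e, ⟨⟨hepos, ⟨w', hw'div, hbc⟩,
    fun f hf hex => hmax f ⟨hf, hex⟩⟩, ⟨w'.length, hlen e w' hbc⟩⟩, ?_⟩
  rintro e' ⟨⟨he'pos, hex', hmax'⟩, _⟩
  have h1 : e' ≤ e := hmax e' ⟨he'pos, hex'⟩
  have h2 : e ≤ e' := hmax' e hepos ⟨w', hw'div, hbc⟩
  omega
end

section
/- Let w be a cyclic word and let w = (w')^e with w' irreducible of length t, so w has length s = et, and let g = gcd(a, t). Then the number of a-equivalence classes of words of length s (for a dividing s) mapping to the cyclic word w under the natural map v_a^1 is exactly g. -/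
/-- A cyclic word is irreducible if it is not a proper power. -/
def IrredCyc (n : ℕ) (w' : List (Fin n)) : Prop :=
  w' ≠ [] ∧ ∀ (u : List (Fin n)) (f : ℕ), BlockCyc n 1 w' (wpow u f) → f = 1

namespace S5

variable {n : ℕ}

lemma wpow_succ (u : List (Fin n)) (k : ℕ) : wpow u (k+1) = u ++ wpow u k := by
  simp [wpow, List.replicate_succ]

lemma wpow_zero (u : List (Fin n)) : wpow u 0 = [] := rfl

lemma wpow_add (u : List (Fin n)) (m k : ℕ) : wpow u (m+k) = wpow u m ++ wpow u k := by
  rw [wpow, wpow, wpow, List.replicate_add, List.flatten_append]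

lemma wpow_length (u : List (Fin n)) (k : ℕ) : (wpow u k).length = k * u.length := by
  induction k with
  | zero => simp [wpow_zero]
  | succ k ih => rw [wpow_succ, List.length_append, ih]; ring

lemma wpow_comm (u : List (Fin n)) (k : ℕ) : wpow u k ++ u = u ++ wpow u k := by
  induction k with
  | zero => simp [wpow_zero]
  | succ k ih =>
      rw [wpow_succ, List.append_assoc, ih]

lemma blockCyc_symm {a : ℕ} {x y : List (Fin n)} (h : BlockCyc n a x y) :
    BlockCyc n a y x := by
  obtain ⟨u, v, h1, h2, h3, h4⟩ := h; exact ⟨v, u, h2, h1, h4, h3⟩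

lemma blockCyc_iff {a : ℕ} {x y : List (Fin n)} (hx : a ∣ x.length) :
    BlockCyc n a x y ↔ ∃ k, a ∣ k ∧ y = x.rotate k := by
  constructor
  · rintro ⟨u, v, h1, h2, rfl, rfl⟩
    refine ⟨u.length, h1, ?_⟩
    rw [List.rotate_eq_drop_append_take (by simp), List.drop_left, List.take_left]
  · rintro ⟨k, hk, rfl⟩
    rcases Nat.eq_zero_or_pos x.length with h0 | h0
    · rw [List.eq_nil_of_length_eq_zero h0]
      exact ⟨[], [], ⟨0, rfl⟩, ⟨0, rfl⟩, rfl, by simp⟩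
    · set m := k % x.length with hm
      have hmlt : m < x.length := Nat.mod_lt _ h0
      have ham : a ∣ m := by
        have hd : a ∣ x.length * (k / x.length) := hx.mul_right _
        have he := Nat.div_add_mod k x.length
        have : m = k - x.length * (k / x.length) := by omega
        rw [this]; exact Nat.dvd_sub hk hd
      refine ⟨x.take m, x.drop m, ?_, ?_, (List.take_append_drop m x).symm, ?_⟩
      · simpa [List.length_take, Nat.min_eq_left hmlt.le] using ham
      · rw [List.length_drop]; exact Nat.dvd_sub hx ham
      · rw [← List.rotate_mod, ← hm, List.rotate_eq_drop_append_take hmlt.le]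

lemma rotate_pow {α : Type*} (l : List α) (p : ℕ) (h : l.rotate p = l) :
    ∀ k, l.rotate (p * k) = l
  | 0 => by simp
  | (k+1) => by rw [Nat.mul_succ, ← List.rotate_rotate, rotate_pow l p h k, h]

lemma rotate_gcd {α : Type*} (l : List α) (a b : ℕ)
    (ha : l.rotate a = l) (hb : l.rotate b = l) : l.rotate (Nat.gcd a b) = l := by
  induction a, b using Nat.gcd.induction with
  | H0 b => simpa using hb
  | H1 a b hpos ih =>
      rw [Nat.gcd_rec]
      refine ih ?_ ha
      have h1 := Nat.div_add_mod b a
      have : l.rotate (a * (b / a) + b % a) = l := by rw [h1]; exact hb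
      rw [← List.rotate_rotate, rotate_pow l a ha] at this
      exact this

lemma rotate_add_mul_length {α : Type*} (l : List α) (m r : ℕ) :
    l.rotate (l.length * m + r) = l.rotate r := by
  rw [← List.rotate_rotate, rotate_pow l l.length (List.rotate_length l)]

lemma rotate_exists {α : Type*} (l : List α) (j r : ℕ) :
    ∃ k, (l.rotate j).rotate k = l.rotate r := by
  rcases Nat.eq_zero_or_pos l.length with h0 | h0
  · have : l = [] := List.eq_nil_of_length_eq_zero h0
    subst this; exact ⟨0, by simp⟩
  · refine ⟨(l.length - j % l.length) + r, ?_⟩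
    rw [List.rotate_rotate]
    have h1 := Nat.div_add_mod j l.length
    have h2 := Nat.mod_lt j h0
    have h3 : l.length * (j / l.length + 1) = l.length * (j / l.length) + l.length := by
      ring
    have : j + (l.length - j % l.length + r) = l.length * (j / l.length + 1) + r := by
      omega
    rw [this, rotate_add_mul_length]

/-- If `l.rotate p = l` with `p` a positive divisor of the length, `l` is a power
of its prefix of length `p`. -/
lemma eq_wpow_of_rotate (p : ℕ) (hp : 0 < p) :
    ∀ (k : ℕ) (l : List (Fin n)), l.length = k * p → l.rotate p = l →
      l = wpow (l.take p) k := by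
  intro k
  induction k with
  | zero =>
      intro l hl _
      have hnil : l = [] := List.eq_nil_of_length_eq_zero (by simpa using hl)
      subst hnil; rfl
  | succ k ih =>
      intro l hl hrot
      have hple : p ≤ l.length := by
        rw [hl]; exact Nat.le_mul_of_pos_left p k.succ_pos
      set x := l.take p with hx
      set m := l.drop p with hm'
      have hxlen : x.length = p := by rw [hx, List.length_take]; omega
      have hmlen : m.length = k * p := by rw [hm', List.length_drop, hl]; ring_nf; omega
      have hsplit : l = x ++ m := (List.take_append_drop p l).symm
      have hcomm : m ++ x = x ++ m := by
        have := hrot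
        rw [List.rotate_eq_drop_append_take hple, ← hx, ← hm'] at this
        rw [this, ← hsplit]
      rcases Nat.eq_zero_or_pos k with hk0 | hk0
      · subst hk0
        have hmnil : m = [] := List.eq_nil_of_length_eq_zero (by simpa using hmlen)
        rw [hsplit, hmnil, wpow_succ, wpow_zero]
      · have hpm : p ≤ m.length := by rw [hmlen]; nlinarith
        have htm : m.take p = x := by
          have h1 : (m ++ x).take p = m.take p := by
            rw [List.take_append]
            have : p - m.length = 0 := by omega
            rw [this, List.take_zero, List.append_nil]
          have h2 : (x ++ m).take p = x := List.take_left' hxlen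
          rw [← h1, hcomm, h2]
        have hdm : (x ++ m).drop p = m := by
          have := List.drop_left (l₁ := x) (l₂ := m)
          rwa [hxlen] at this
        have hrm : m.rotate p = m := by
          rw [List.rotate_eq_drop_append_take hpm, htm]
          have h1 : (m ++ x).drop p = m.drop p ++ x := by
            rw [List.drop_append]
            have : p - m.length = 0 := by omega
            rw [this, List.drop_zero]
          rw [← h1, hcomm, hdm]
        have hthis := ih m hmlen hrm
        rw [htm] at hthis
        rw [wpow_succ, ← hthis]
        exact hsplit

lemma rotate_wpow_self (w' : List (Fin n)) (e : ℕ) :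
    (wpow w' e).rotate w'.length = wpow w' e := by
  cases e with
  | zero => simp [wpow_zero]
  | succ e =>
      rw [wpow_succ]
      rcases Nat.eq_zero_or_pos w'.length with h0 | h0
      · rw [List.eq_nil_of_length_eq_zero h0]; simp
      · rw [List.rotate_eq_drop_append_take (by simp), List.drop_left, List.take_left,
          wpow_comm]

lemma period_dvd (w' : List (Fin n)) (hirr : IrredCyc n w') (e : ℕ) (he : 0 < e)
    (r : ℕ) (h : (wpow w' e).rotate r = wpow w' e) : w'.length ∣ r := by
  set t := w'.length with htdef
  have ht : 0 < t := List.length_pos_iff.mpr hirr.1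
  set W := wpow w' e with hW
  set g' := Nat.gcd r t with hg'
  have hrg : W.rotate g' = W := rotate_gcd W r t h (rotate_wpow_self w' e)
  have hg't : g' ∣ t := Nat.gcd_dvd_right r t
  have hg'pos : 0 < g' := Nat.gcd_pos_of_pos_right r ht
  have hWlen : W.length = e * t := wpow_length w' e
  have hg's : g' ∣ W.length := by rw [hWlen]; exact hg't.mul_left e
  have hWp : W = wpow (W.take g') (W.length / g') :=
    eq_wpow_of_rotate g' hg'pos (W.length / g') W (Nat.div_mul_cancel hg's).symm hrg
  set u := W.take g' with hu
  have hulen : u.length = g' := by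
    rw [hu, List.length_take]
    have : g' ≤ W.length := Nat.le_of_dvd (by rw [hWlen]; exact Nat.mul_pos he ht) hg's
    omega
  -- w' = W.take t
  have hw't : W.take t = w' := by
    have he1 : e = (e - 1) + 1 := by omega
    rw [hW, he1, wpow_succ]
    exact List.take_left' rfl
  -- W.take t = wpow u (t / g')
  have hmN : t / g' ≤ W.length / g' :=
    Nat.div_le_div_right (by rw [hWlen]; exact Nat.le_mul_of_pos_left t he)
  have htake : W.take t = wpow u (t / g') := by
    conv_lhs => rw [hWp]
    have hsplit : W.length / g' = t / g' + (W.length / g' - t / g') := by omega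
    rw [hsplit, wpow_add]
    refine List.take_left' ?_
    rw [wpow_length, hulen, Nat.div_mul_cancel hg't]
  have hw'pow : w' = wpow u (t / g') := by rw [← hw't, htake]
  have hbc : BlockCyc n 1 w' (wpow u (t / g')) :=
    ⟨[], w', ⟨0, rfl⟩, one_dvd _, by simp, by rw [List.append_nil]; exact hw'pow.symm⟩
  have hf1 : t / g' = 1 := hirr.2 u (t / g') hbc
  have : t = g' := by
    have := Nat.div_mul_cancel hg't
    rw [hf1, one_mul] at this
    omega
  rw [htdef] at this ⊢
  rw [this]
  exact Nat.gcd_dvd_left r t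

lemma rotate_eq_of_modEq {α : Type*} (l : List α) (p : ℕ) (hp : l.rotate p = l)
    {r r' : ℕ} (h : r ≡ r' [MOD p]) : l.rotate r = l.rotate r' := by
  have key : ∀ a b : ℕ, a ≤ b → a ≡ b [MOD p] → l.rotate a = l.rotate b := by
    intro a b hab hmod
    obtain ⟨c, hc⟩ := (Nat.modEq_iff_dvd' hab).mp hmod
    have : b = p * c + a := by omega
    rw [this, ← List.rotate_rotate, rotate_pow l p hp]
  rcases le_total r r' with hle | hle
  · exact key r r' hle h
  · exact (key r' r hle h.symm).symm

lemma modEq_of_rotate_eq (w' : List (Fin n)) (hirr : IrredCyc n w') (e : ℕ) (he : 0 < e)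
    {r r' : ℕ} (h : (wpow w' e).rotate r = (wpow w' e).rotate r') :
    r ≡ r' [MOD w'.length] := by
  set W := wpow w' e with hW
  have ht : 0 < w'.length := List.length_pos_iff.mpr hirr.1
  have hs : 0 < W.length := by rw [hW, wpow_length]; positivity
  set c := W.length - r' % W.length with hc
  have h2 : W.rotate (r' + c) = W := by
    have hmod : (r' + c) % W.length = 0 := by
      have h1 := Nat.div_add_mod r' W.length
      have h2 := Nat.mod_lt r' hs
      have h3 : W.length * (r' / W.length + 1) = W.length * (r' / W.length) + W.length := by
        ring
      have : r' + c = W.length * (r' / W.length + 1) := by omega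
      rw [this, Nat.mul_mod_right]
    rw [← List.rotate_mod, hmod, List.rotate_zero]
  have h3 : W.rotate (r + c) = W := by
    rw [← List.rotate_rotate, h, List.rotate_rotate, h2]
  have d1 : w'.length ∣ r + c := period_dvd w' hirr e he _ h3
  have d2 : w'.length ∣ r' + c := period_dvd w' hirr e he _ h2
  have : r + c ≡ r' + c [MOD w'.length] := by
    calc r + c ≡ 0 [MOD w'.length] := (Nat.modEq_zero_iff_dvd).mpr d1
    _ ≡ r' + c [MOD w'.length] := ((Nat.modEq_zero_iff_dvd).mpr d2).symm
  exact this.add_right_cancel' c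

lemma exists_multiple_modEq (a t m : ℕ) (ht : 0 < t) (hm : Nat.gcd a t ∣ m) :
    ∃ k, a * k ≡ m [MOD t] := by
  obtain ⟨c, hc⟩ := hm
  set x := Nat.gcdA a t with hx
  set y := Nat.gcdB a t with hy
  have hbez : (Nat.gcd a t : ℤ) = a * x + t * y := Nat.gcd_eq_gcd_ab a t
  set z : ℤ := x * c with hz
  have htz : (t : ℤ) ≠ 0 := by exact_mod_cast ht.ne'
  set K : ℤ := z % t with hK
  have hK0 : 0 ≤ K := Int.emod_nonneg z htz
  refine ⟨K.toNat, ?_⟩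
  rw [Nat.modEq_iff_dvd]
  push_cast [Int.toNat_of_nonneg hK0]
  have h1 : z - K = t * (z / t) := by
    have := Int.mul_ediv_add_emod z t
    rw [← hK] at this
    linarith
  refine ⟨a * (z / t) + y * c, ?_⟩
  have hcZ : (m : ℤ) = (Nat.gcd a t : ℤ) * c := by exact_mod_cast hc
  rw [hcZ, hbez]
  linear_combination a * h1

end S5

open S5

/-- let `w` be a cyclic word with `w = (w')^e`, `w'` irreducible of
length `t`, so `w` has length `s = e·t`; assume `a ∣ s` and put `g = gcd(a,t)`.
Then there are exactly `g` many `a`-equivalence classes of words mapping to the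
cyclic word `w` under `v_a^1` (here exhibited by a set of `g` pairwise
`~_a`-inequivalent representatives hitting every such word). -/
theorem stmt5 (n a : ℕ) (ha : 0 < a) (w w' : List (Fin n)) (e t s : ℕ)
    (ht : w'.length = t) (hirr : IrredCyc n w') (he : 0 < e)
    (hw : BlockCyc n 1 w (wpow w' e)) (hs : w.length = s) (hdvd : a ∣ s) :
    ∃ U : Finset (List (Fin n)), U.card = Nat.gcd a t ∧
      (∀ u ∈ U, a ∣ u.length ∧ BlockCyc n 1 u w) ∧
      (∀ u ∈ U, ∀ v ∈ U, BlockCyc n a u v → u = v) ∧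
      (∀ v : List (Fin n), a ∣ v.length → BlockCyc n 1 v w →
        ∃ u ∈ U, BlockCyc n a v u) := by
  classical
  subst ht hs
  set t := w'.length with htdef
  set W := wpow w' e with hW
  have htpos : 0 < t := List.length_pos_iff.mpr hirr.1
  set g := Nat.gcd a t with hg
  have hgpos : 0 < g := Nat.gcd_pos_of_pos_left t ha
  have hgt : g ≤ t := Nat.le_of_dvd htpos (Nat.gcd_dvd_right a t)
  -- w is a rotation of W
  obtain ⟨r₀, -, hr₀⟩ := (blockCyc_iff (x := W) (one_dvd _)).mp (blockCyc_symm hw)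
  have hWw : W.length = w.length := by rw [hr₀, List.length_rotate]
  have haW : a ∣ W.length := by rw [hWw]; exact hdvd
  refine ⟨(Finset.range g).image (fun j => W.rotate j), ?_, ?_, ?_, ?_⟩
  · rw [Finset.card_image_of_injOn, Finset.card_range]
    intro i hi j hj hij
    simp only [Finset.coe_range, Set.mem_Iio] at hi hj
    have hmod : i ≡ j [MOD t] := modEq_of_rotate_eq w' hirr e he hij
    have : i % t = j % t := hmod
    rw [Nat.mod_eq_of_lt (by omega), Nat.mod_eq_of_lt (by omega)] at this
    exact this
  · intro u hu
    obtain ⟨j, -, rfl⟩ := Finset.mem_image.mp hu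
    constructor
    · rw [List.length_rotate]; exact haW
    · rw [blockCyc_iff (one_dvd _)]
      obtain ⟨k, hk⟩ := rotate_exists W j r₀
      exact ⟨k, one_dvd _, by rw [hk]; exact hr₀⟩
  · intro u hu v hv huv
    obtain ⟨i, hi, rfl⟩ := Finset.mem_image.mp hu
    obtain ⟨j, hj, rfl⟩ := Finset.mem_image.mp hv
    simp only [Finset.mem_range] at hi hj
    obtain ⟨d, had, hd⟩ := (blockCyc_iff (by rw [List.length_rotate]; exact haW)).mp huv
    rw [List.rotate_rotate] at hd
    have hmod : i + d ≡ j [MOD t] := modEq_of_rotate_eq w' hirr e he hd.symm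
    have hmodg : i + d ≡ j [MOD g] := hmod.of_dvd (Nat.gcd_dvd_right a t)
    have hgd : g ∣ d := dvd_trans (Nat.gcd_dvd_left a t) had
    have hij : i ≡ j [MOD g] := by
      obtain ⟨q, rfl⟩ := hgd
      have hig : i ≡ i + g * q [MOD g] :=
        (Nat.modEq_iff_dvd' (Nat.le_add_right _ _)).mpr ⟨q, by omega⟩
      exact hig.trans hmodg
    have : i % g = j % g := hij
    rw [Nat.mod_eq_of_lt hi, Nat.mod_eq_of_lt hj] at this
    rw [this]
  · intro v hav hvw
    obtain ⟨k₁, -, hk₁⟩ := (blockCyc_iff (x := w) (one_dvd _)).mp (blockCyc_symm hvw)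
    set r := r₀ + k₁ with hr
    have hv : v = W.rotate r := by rw [hk₁, hr₀, List.rotate_rotate]
    set j := r % g with hj
    have hjlt : j < g := Nat.mod_lt _ hgpos
    have hjle : j ≤ r := Nat.mod_le _ _
    set m := r - j with hm
    have hgm : g ∣ m := by
      have h1 := Nat.div_add_mod r g
      exact ⟨r / g, by omega⟩
    obtain ⟨k, hk⟩ := exists_multiple_modEq a t m htpos (by rw [← hg]; exact hgm)
    have hmod : j + a * k ≡ r [MOD t] := by
      have hjm : j + m = r := by omega
      calc j + a * k ≡ j + m [MOD t] := Nat.ModEq.add_left j hk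
        _ = r := hjm
    have heq : W.rotate (j + a * k) = W.rotate r :=
      rotate_eq_of_modEq W t (rotate_wpow_self w' e) hmod
    refine ⟨W.rotate j, Finset.mem_image.mpr ⟨j, Finset.mem_range.mpr hjlt, rfl⟩, ?_⟩
    apply blockCyc_symm
    rw [blockCyc_iff (by rw [List.length_rotate]; exact haW)]
    exact ⟨a * k, ⟨k, rfl⟩, by rw [hv, ← heq, List.rotate_rotate]⟩
end

section
/- In the simplicial chain complex of X_{s,a}, the chain ι_{2d} = Σ x_0 x^{k_0''} ⊗ x ⊗ x^{k_2} ⊗ x ⊗ ... ⊗ x ⊗ x^{k_{2d}}, where the sum is over all (k_0'', k_2, k_4, ..., k_{2d}) with k_0'' + k_2 + ... + k_{2d} = s − d − 1, 0 ≤ k_0'' ≤ a−2 and 1 ≤ k_{2i} ≤ a−1, is a cycle (its simplicial boundary vanishes), where d = ⌊(s−1)/a⌋ and a does not divide s. -/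
open Classical in
/-- A (possibly invalid) degree-`e` generator symbol
`x^{k₀'} x₀ x^{k₀''} ⊗ x^{k₁} ⊗ … ⊗ x^{k_e}` of the simplicial chain complex of
`X_{s,a}`: the first component is `k₀'`, and the function records
`k₀'' = g.2 0` and `k_i = g.2 i` for `1 ≤ i ≤ e`. -/
abbrev Gen (e : ℕ) := ℕ × (Fin (e + 1) → ℕ)

/-- Degree-`e` chains: formal `ℤ`-linear combinations of generator symbols. -/
abbrev Chain (e : ℕ) := Gen e →₀ ℤ

/-- The symbol is a nondegenerate simplex of `X_{s,a}` distinct from the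
basepoint: `k₀' + 1 + k₀'' < a`, `1 ≤ k_i < a` for `1 ≤ i ≤ e`, and
`k₀' + k₀'' + k₁ + … + k_e = s - 1`. -/
def ValidGen (s a e : ℕ) (g : Gen e) : Prop :=
  g.1 + 1 + g.2 0 < a ∧ (∀ i : Fin (e + 1), i ≠ 0 → 1 ≤ g.2 i ∧ g.2 i < a) ∧
    g.1 + ∑ i, g.2 i = s - 1

/-- The `j`-th face of a degree-`(e+1)` generator: the Hochschild-type face map
multiplying adjacent tensor factors (`d_0` multiplies the first `x`-factor into
the `x₀`-slot on the right, the last face multiplies the last factor into the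
`x₀`-slot on the left, and middle faces merge adjacent factors). -/
def face (e : ℕ) (j : Fin (e + 2)) (g : Gen (e + 1)) : Gen e :=
  if j = 0 then
    (g.1, fun i => if i = 0 then g.2 0 + g.2 1 else g.2 i.succ)
  else if j = Fin.last (e + 1) then
    (g.1 + g.2 (Fin.last (e + 1)), fun i => g.2 i.castSucc)
  else
    (g.1, fun i => if (i : ℕ) < (j : ℕ) then g.2 i.castSucc
      else if (i : ℕ) = (j : ℕ) then g.2 i.castSucc + g.2 i.succ
      else g.2 i.succ)

open Classical in
/-- The boundary of a generator: the alternating sum of its faces, where a face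
that hits the basepoint of `X_{s,a}` (i.e. fails to be a valid generator, its
merged factor having length `≥ a`) counts as zero. -/
noncomputable def bdGen (s a e : ℕ) (g : Gen (e + 1)) : Chain e :=
  ∑ j : Fin (e + 2), ((-1 : ℤ) ^ (j : ℕ)) •
    (if ValidGen s a e (face e j g) then Finsupp.single (face e j g) 1 else 0)

/-- The simplicial boundary map of `C_*(X_{s,a})`, extended linearly; the
boundary of a degree-`0` chain is zero. -/
noncomputable def Bd (s a : ℕ) : (e : ℕ) → Chain e → Chain (e - 1)
  | 0 => fun _ => 0
  | (e + 1) => fun c => c.sum fun g z => z • bdGen s a e g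

open Classical in
/-- The chain `ι_{2d}`: the sum of the generators
`x₀ x^{k₀''} ⊗ x ⊗ x^{k₂} ⊗ x ⊗ … ⊗ x ⊗ x^{k_{2d}}` over all
`(k₀'', k₂, …, k_{2d})` with `k₀'' + k₂ + … + k_{2d} = s − d − 1`,
`0 ≤ k₀'' ≤ a−2` and `1 ≤ k_{2i} ≤ a−1` (the entries are encoded as elements of
`Fin a`, so all are `≤ a − 1`, and the total-sum condition
`∑ u i = s - 1` includes the `d` entries equal to `1` in odd slots). -/
noncomputable def iotaEven (s a d : ℕ) : Chain (2 * d) :=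
  ∑ u ∈ Finset.univ.filter (fun u : Fin (2 * d + 1) → Fin a =>
      (∀ i : Fin (2 * d + 1), Odd (i : ℕ) → (u i : ℕ) = 1) ∧
      (∀ i : Fin (2 * d + 1), i ≠ 0 → Even (i : ℕ) → 1 ≤ (u i : ℕ)) ∧
      (u 0 : ℕ) + 2 ≤ a ∧ (∑ i, (u i : ℕ)) = s - 1),
    Finsupp.single ((0, fun i => (u i : ℕ)) : Gen (2 * d)) 1

namespace S12

lemma fin_ne0 {n : ℕ} (i : Fin (n+1)) (h : (i:ℕ) ≠ 0) : i ≠ 0 := fun e => h (by rw [e]; rfl)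

/-- the generator attached to `u` -/
def gg {a k : ℕ} (u : Fin (2*k+3) → Fin a) : Gen (2*k+2) := (0, fun i => (u i : ℕ))

def finIncr {a : ℕ} (x : Fin a) : Fin a :=
  ⟨((x : ℕ) + 1) % a, Nat.mod_lt _ (Nat.lt_of_le_of_lt (Nat.zero_le _) x.isLt)⟩

def finDecr {a : ℕ} (x : Fin a) : Fin a :=
  ⟨(x : ℕ) - 1, Nat.lt_of_le_of_lt (Nat.sub_le _ _) x.isLt⟩

def moveOne {a k : ℕ} (u : Fin (2*k+3) → Fin a) (src dst : Fin (2*k+3)) :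
    Fin (2*k+3) → Fin a :=
  fun i => if i = dst then finIncr (u i) else if i = src then finDecr (u i) else u i

lemma moveOne_val {a k : ℕ} (u : Fin (2*k+3) → Fin a) (src dst m : Fin (2*k+3)) :
    ((moveOne u src dst) m : ℕ) =
      if (m : ℕ) = (dst : ℕ) then ((u m : ℕ) + 1) % a
      else if (m : ℕ) = (src : ℕ) then (u m : ℕ) - 1 else (u m : ℕ) := by
  unfold moveOne
  simp only [Fin.ext_iff]
  split_ifs <;> rfl

/-- membership predicate for the indexing set of `iotaEven` -/
def MemU (s a k : ℕ) (u : Fin (2*k+3) → Fin a) : Prop :=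
  (∀ i : Fin (2*k+3), Odd (i : ℕ) → (u i : ℕ) = 1) ∧
  (∀ i : Fin (2*k+3), i ≠ 0 → Even (i : ℕ) → 1 ≤ (u i : ℕ)) ∧
  (u 0 : ℕ) + 2 ≤ a ∧ (∑ i, (u i : ℕ)) = s - 1

/-- merged-tuple form of the faces `0 ≤ j ≤ 2k+1` -/
def M {k : ℕ} (w : Fin (2*k+3) → ℕ) (j : ℕ) : Fin (2*k+2) → ℕ :=
  fun i => if (i : ℕ) < j then w i.castSucc
    else if (i : ℕ) = j then w i.castSucc + w i.succ else w i.succ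

lemma face_eq_M {k : ℕ} (w : Fin (2*k+3) → ℕ) (j : Fin (2*k+3)) (hj : (j : ℕ) ≤ 2*k+1) :
    face (2*k+1) j (0, w) = ((0 : ℕ), M w (j : ℕ)) := by
  have hlast : j ≠ Fin.last (2*k+1+1) := by
    intro h; subst h; simp [Fin.last] at hj
  rcases eq_or_ne j 0 with h0 | h0
  · subst h0
    have h1 : face (2*k+1) (0 : Fin (2*k+3)) (0, w)
        = ((0:ℕ), fun i : Fin (2*k+2) => if i = 0 then w 0 + w 1 else w i.succ) := by
      simp [face]
    rw [h1]
    refine Prod.ext rfl ?_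
    funext i
    show (if i = 0 then w 0 + w 1 else w i.succ) = M w ((0 : Fin (2*k+3)) : ℕ) i
    have h00 : ((0 : Fin (2*k+3)) : ℕ) = 0 := rfl
    rw [h00]; unfold M
    rcases eq_or_ne i 0 with hi | hi
    · subst hi
      rw [if_pos rfl, if_neg (by simp), if_pos (by simp)]
      rfl
    · have hiv : (i : ℕ) ≠ 0 := fun h => hi (Fin.ext h)
      rw [if_neg hi, if_neg (by omega), if_neg (by omega)]
  · unfold face M
    rw [if_neg h0, if_neg hlast]

lemma face_last_eq {k : ℕ} (w : Fin (2*k+3) → ℕ) (j : Fin (2*k+3)) (hj : (j : ℕ) = 2*k+2) :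
    face (2*k+1) j (0, w) = (w j, fun i : Fin (2*k+2) => w i.castSucc) := by
  have hl : j = Fin.last (2*k+1+1) := by
    rw [Fin.ext_iff]; simpa [Fin.last] using hj
  subst hl
  unfold face
  rw [if_neg (by simp [Fin.ext_iff, Fin.last]), if_pos rfl]
  exact Prod.ext (by simp) rfl


/-- `u` as a function on naturals (`0` out of range) -/
def FF {a k : ℕ} (u : Fin (2*k+3) → Fin a) : ℕ → ℕ :=
  fun n => if h : n < 2*k+3 then (u ⟨n, h⟩ : ℕ) else 0

lemma FF_eq {a k : ℕ} (u : Fin (2*k+3) → Fin a) (i : Fin (2*k+3)) :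
    FF u (i : ℕ) = (u i : ℕ) := by
  unfold FF; rw [dif_pos i.isLt]

lemma FF_lt_a {a k : ℕ} (u : Fin (2*k+3) → Fin a) (n : ℕ) (h : n < 2*k+3) :
    FF u n < a := by
  unfold FF; rw [dif_pos h]; exact (u _).isLt

lemma FF_odd {s a k : ℕ} {u : Fin (2*k+3) → Fin a} (hu : MemU s a k u)
    (n : ℕ) (h : n < 2*k+3) (ho : n % 2 = 1) : FF u n = 1 := by
  have := hu.1 ⟨n, h⟩ (by rw [Nat.odd_iff]; exact ho)
  unfold FF; rw [dif_pos h]; exact this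

lemma FF_even_ge1 {s a k : ℕ} {u : Fin (2*k+3) → Fin a} (hu : MemU s a k u)
    (n : ℕ) (h : n < 2*k+3) (he : n % 2 = 0) (h0 : n ≠ 0) : 1 ≤ FF u n := by
  have := hu.2.1 ⟨n, h⟩ (by simp [Fin.ext_iff]; omega) (by rw [Nat.even_iff]; exact he)
  unfold FF; rw [dif_pos h]; exact this

lemma FF_zero {a k : ℕ} (u : Fin (2*k+3) → Fin a) : FF u 0 = (u 0 : ℕ) := by
  have : ((0 : Fin (2*k+3)) : ℕ) = 0 := rfl
  rw [← this, FF_eq]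

lemma pair_sum (f : ℕ → ℕ) (K : ℕ) :
    ∑ i ∈ Finset.range (2*K+1), f i
      = f 0 + ∑ m ∈ Finset.range K, (f (2*m+1) + f (2*m+2)) := by
  induction K with
  | zero => simp
  | succ n ih =>
      have h2 : 2*(n+1)+1 = (2*n+1)+1+1 := by ring
      rw [h2, Finset.sum_range_succ, Finset.sum_range_succ, ih, Finset.sum_range_succ,
        show 2*n+1+1 = 2*n+2 from by ring]
      ring

lemma sum_decomp {a k : ℕ} (u : Fin (2*k+3) → Fin a) :
    (∑ i, (u i : ℕ)) = FF u 0 + ∑ m ∈ Finset.range (k+1), (FF u (2*m+1) + FF u (2*m+2)) := by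
  have h1 : (∑ i, (u i : ℕ)) = ∑ i ∈ Finset.range (2*k+3), FF u i := by
    rw [← Fin.sum_univ_eq_sum_range (FF u) (2*k+3)]
    exact Finset.sum_congr rfl fun i _ => (FF_eq u i).symm
  rw [h1, show 2*k+3 = 2*(k+1)+1 by ring, pair_sum]

lemma base_sum {s a k : ℕ} {u : Fin (2*k+3) → Fin a} (hu : MemU s a k u) :
    FF u 0 + (k+1) + ∑ m ∈ Finset.range (k+1), FF u (2*m+2) = s - 1 := by
  have hodd : ∀ m ∈ Finset.range (k+1), FF u (2*m+1) = 1 := fun m hm => by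
    rw [Finset.mem_range] at hm
    exact FF_odd hu _ (by omega) (by omega)
  have h := sum_decomp u
  rw [hu.2.2.2] at h
  rw [Finset.sum_add_distrib, Finset.sum_congr rfl hodd, Finset.sum_const,
    Finset.card_range, smul_eq_mul, mul_one] at h
  omega

lemma M_FF {a k : ℕ} (u : Fin (2*k+3) → Fin a) (j : ℕ) (i : Fin (2*k+2)) :
    M (fun i => (u i : ℕ)) j i
      = if (i : ℕ) < j then FF u (i : ℕ)
        else if (i : ℕ) = j then FF u (i : ℕ) + FF u ((i : ℕ)+1)
        else FF u ((i : ℕ)+1) := by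
  have h1 : ((u i.castSucc : ℕ)) = FF u (i : ℕ) := by
    unfold FF; rw [dif_pos (by have := i.isLt; omega)]
    exact congrArg (fun x => ((u x : ℕ))) (Fin.ext rfl)
  have h2 : ((u i.succ : ℕ)) = FF u ((i : ℕ)+1) := by
    unfold FF; rw [dif_pos (by have := i.isLt; omega)]
    exact congrArg (fun x => ((u x : ℕ))) (Fin.ext rfl)
  unfold M
  split_ifs <;> simp [h1, h2]

lemma valid_merge0 {s a k : ℕ} {u : Fin (2*k+3) → Fin a} (j : Fin (2*k+3))
    (hj : (j : ℕ) = 0)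
    (hv : ValidGen s a (2*k+1) (face (2*k+1) j (gg u))) :
    1 + FF u 0 + FF u 1 < a := by
  rw [show (gg u) = ((0:ℕ), fun i => (u i : ℕ)) from rfl, face_eq_M _ j (by omega)] at hv
  have h := hv.1
  simp only [hj] at h
  rw [M_FF] at h
  norm_num at h ⊢
  omega

lemma valid_mergeM {s a k : ℕ} {u : Fin (2*k+3) → Fin a} (j : Fin (2*k+3))
    (hj1 : 1 ≤ (j : ℕ)) (hj : (j : ℕ) ≤ 2*k+1)
    (hv : ValidGen s a (2*k+1) (face (2*k+1) j (gg u))) :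
    FF u (j : ℕ) + FF u ((j : ℕ)+1) < a := by
  rw [show (gg u) = ((0:ℕ), fun i => (u i : ℕ)) from rfl, face_eq_M _ j hj] at hv
  have h : M (fun i => ((u i : ℕ))) (j:ℕ) ⟨(j:ℕ), by omega⟩ < a :=
    (hv.2.1 ⟨(j : ℕ), by omega⟩ (fin_ne0 _ (by show (j:ℕ) ≠ 0; omega))).2
  rw [M_FF] at h
  simp only [lt_irrefl, if_false, if_pos rfl] at h
  simpa using h


lemma sumG_le {a k : ℕ} (u : Fin (2*k+3) → Fin a) (T : Finset ℕ) (hT : ∀ m ∈ T, m ≤ k) :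
    ∑ m ∈ T, (FF u (2*m+2) + 1) ≤ T.card * a := by
  have := Finset.sum_le_card_nsmul T (fun m => FF u (2*m+2) + 1) a
    (fun m hm => by
      show FF u (2*m+2) + 1 ≤ a
      have := FF_lt_a u (2*m+2) (by have := hT m hm; omega); omega)
  simpa [smul_eq_mul] using this

lemma L1 {s a k : ℕ} {u : Fin (2*k+3) → Fin a} (ha : 2 ≤ a) (hak : a*(k+1) ≤ s-1)
    (hu : MemU s a k u) (j : Fin (2*k+3)) (hj : (j : ℕ) = 2*k+2) :
    ¬ ValidGen s a (2*k+1) (face (2*k+1) j (gg u)) := by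
  intro hv
  rw [show (gg u) = ((0:ℕ), fun i => (u i : ℕ)) from rfl, face_last_eq _ j hj] at hv
  have h1 : (u j : ℕ) + 1 + (u 0 : ℕ) < a := by
    have := hv.1
    simpa [show ((0 : Fin (2*k+2)).castSucc : Fin (2*k+3)) = 0 from Fin.ext (by simp)]
      using this
  have hbase := base_sum hu
  have hsplit : ∑ m ∈ Finset.range (k+1), FF u (2*m+2)
      = (∑ m ∈ Finset.range k, FF u (2*m+2)) + FF u (2*k+2) := by
    rw [Finset.sum_range_succ]
  have hGk : FF u (2*k+2) = (u j : ℕ) := by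
    unfold FF; rw [dif_pos (by omega)]
    exact congrArg (fun x => ((u x : ℕ))) (Fin.ext (by simp [hj]))
  have hS : (∑ m ∈ Finset.range k, (FF u (2*m+2) + 1)) ≤ k * a :=
    by simpa using sumG_le u (Finset.range k) (fun m hm => by
      rw [Finset.mem_range] at hm; omega)
  rw [Finset.sum_add_distrib, Finset.sum_const, Finset.card_range, smul_eq_mul,
    mul_one] at hS
  have hF0 : FF u 0 = (u 0 : ℕ) := FF_zero u
  have key : a*(k+1) = k*a + a := by ring
  linarith

lemma L2 {s a k : ℕ} {u : Fin (2*k+3) → Fin a} (ha : 2 ≤ a) (hak : a*(k+1) ≤ s-1)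
    (hu : MemU s a k u) (j : Fin (2*k+3)) (hj2 : (j : ℕ) % 2 = 0)
    (hv : ValidGen s a (2*k+1) (face (2*k+1) j (gg u))) :
    (Finset.univ.filter fun t : Fin (2*k+3) =>
      (j : ℕ) + 1 < (t : ℕ) ∧ (t : ℕ) % 2 = 0 ∧ 2 ≤ (u t : ℕ)).Nonempty := by
  by_contra hne
  have hsm : ∀ t : Fin (2*k+3), (j : ℕ) + 1 < (t : ℕ) → (t : ℕ) % 2 = 0 → (u t : ℕ) ≤ 1 := by
    intro t h1 h2
    by_contra h3
    exact hne ⟨t, Finset.mem_filter.2 ⟨Finset.mem_univ _, h1, h2, by omega⟩⟩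
  have hjle : (j : ℕ) ≤ 2*k := by
    rcases Nat.lt_or_ge (j : ℕ) (2*k+2) with h | h
    · omega
    · exact absurd hv (L1 ha hak hu j (by have := j.isLt; omega))
  set m₀ := (j : ℕ) / 2 with hm₀
  have hjv : (j : ℕ) = 2*m₀ := by omega
  have hm₀k : m₀ ≤ k := by omega
  have hones : ∀ m ∈ Finset.Ico m₀ (k+1), FF u (2*m+2) = 1 := by
    intro m hm
    rw [Finset.mem_Ico] at hm
    have hlt : 2*m+2 < 2*k+3 := by omega
    have h1 := hsm ⟨2*m+2, hlt⟩ (by simpa using by omega) (by simpa using by omega)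
    have h2 := FF_even_ge1 hu (2*m+2) hlt (by omega) (by omega)
    unfold FF at h2 ⊢; rw [dif_pos hlt] at h2 ⊢; omega
  have hbase := base_sum hu
  have hsplit : ∑ m ∈ Finset.range (k+1), FF u (2*m+2)
      = (∑ m ∈ Finset.range m₀, FF u (2*m+2)) + ∑ m ∈ Finset.Ico m₀ (k+1), FF u (2*m+2) := by
    rw [Finset.range_eq_Ico, ← Finset.sum_Ico_consecutive _ (Nat.zero_le m₀) (by omega),
      ← Finset.range_eq_Ico]
  have htail : ∑ m ∈ Finset.Ico m₀ (k+1), FF u (2*m+2) = (k+1-m₀) := by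
    rw [Finset.sum_congr rfl hones, Finset.sum_const, Nat.card_Ico, smul_eq_mul, mul_one]
  have hF0 : FF u 0 = (u 0 : ℕ) := FF_zero u
  have hF0a : FF u 0 + 2 ≤ a := by rw [hF0]; exact hu.2.2.1
  rcases Nat.eq_zero_or_pos m₀ with h0 | h1
  · -- j = 0
    have hmerge := valid_merge0 j (by omega) hv
    have hFF1 : FF u 1 = 1 := FF_odd hu 1 (by omega) (by omega)
    rw [hsplit, htail, h0] at hbase
    simp at hbase
    have key : a*(k+1) = a*k + a := by ring
    have h2k : 2*k ≤ a*k := Nat.mul_le_mul_right k ha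
    linarith
  · -- j = 2m₀ ≥ 2
    obtain ⟨r, hr⟩ : ∃ r, m₀ = r + 1 := ⟨m₀ - 1, by omega⟩
    have hmerge := valid_mergeM j (by omega) (by omega) hv
    have hFFj1 : FF u ((j:ℕ)+1) = 1 := FF_odd hu _ (by omega) (by omega)
    have hGm : FF u (2*r+2) + 2 ≤ a := by
      have : 2*r+2 = (j:ℕ) := by omega
      rw [this]; omega
    have hsplit2 : ∑ m ∈ Finset.range m₀, FF u (2*m+2)
        = (∑ m ∈ Finset.range r, FF u (2*m+2)) + FF u (2*r+2) := by
      rw [hr, Finset.sum_range_succ]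
    have hS : (∑ m ∈ Finset.range r, (FF u (2*m+2) + 1)) ≤ r * a :=
      sumG_le u (Finset.range r) (fun m hm => by rw [Finset.mem_range] at hm; omega) |>.trans
        (by rw [Finset.card_range])
    rw [Finset.sum_add_distrib, Finset.sum_const, Finset.card_range, smul_eq_mul,
      mul_one] at hS
    obtain ⟨c, hc⟩ : ∃ c, k + 1 = m₀ + (c+1) := ⟨k - m₀, by omega⟩
    have key : a*(k+1) = r*a + a*c + 2*a := by rw [hc, hr]; ring
    have h2c : 2*c ≤ a*c := Nat.mul_le_mul_right c ha
    have htail' : (k+1-m₀ : ℕ) = c+1 := by omega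
    rw [hsplit, hsplit2, htail, htail'] at hbase
    linarith

lemma L3 {s a k : ℕ} {u : Fin (2*k+3) → Fin a} (ha : 2 ≤ a) (hak : a*(k+1) ≤ s-1)
    (hu : MemU s a k u) (j : Fin (2*k+3)) (hj2 : (j : ℕ) % 2 = 1)
    (hv : ValidGen s a (2*k+1) (face (2*k+1) j (gg u)))
    (hne : ¬ (Finset.univ.filter fun q : Fin (2*k+3) =>
      (q : ℕ) < (j : ℕ) ∧ (q : ℕ) % 2 = 0 ∧ 2 ≤ (u q : ℕ)).Nonempty) :
    1 ≤ (u 0 : ℕ) := by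
  by_contra h00
  have hF00 : FF u 0 = 0 := by rw [FF_zero]; omega
  have hsm : ∀ q : Fin (2*k+3), (q : ℕ) < (j : ℕ) → (q : ℕ) % 2 = 0 → (u q : ℕ) ≤ 1 := by
    intro q h1 h2
    by_contra h3
    exact hne ⟨q, Finset.mem_filter.2 ⟨Finset.mem_univ _, h1, h2, by omega⟩⟩
  have hjle : (j : ℕ) ≤ 2*k+1 := by have := j.isLt; omega
  set m₁ := (j : ℕ) / 2 with hm₁
  have hjv : (j : ℕ) = 2*m₁+1 := by omega
  have hm₁k : m₁ ≤ k := by omega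
  have hones : ∀ m ∈ Finset.range m₁, FF u (2*m+2) = 1 := by
    intro m hm
    rw [Finset.mem_range] at hm
    have hlt : 2*m+2 < 2*k+3 := by omega
    have h1 := hsm ⟨2*m+2, hlt⟩ (by simpa using by omega) (by simpa using by omega)
    have h2 := FF_even_ge1 hu (2*m+2) hlt (by omega) (by omega)
    unfold FF at h2 ⊢; rw [dif_pos hlt] at h2 ⊢; omega
  have hmerge := valid_mergeM j (by omega) (by omega) hv
  have hFFj : FF u (j:ℕ) = 1 := FF_odd hu _ (by omega) (by omega)
  have hGm : FF u (2*m₁+2) + 2 ≤ a := by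
    have : 2*m₁+2 = (j:ℕ)+1 := by omega
    rw [this]; omega
  have hbase := base_sum hu
  have hsplit : ∑ m ∈ Finset.range (k+1), FF u (2*m+2)
      = ((∑ m ∈ Finset.range m₁, FF u (2*m+2)) + FF u (2*m₁+2))
        + ∑ m ∈ Finset.Ico (m₁+1) (k+1), FF u (2*m+2) := by
    rw [Finset.range_eq_Ico, ← Finset.sum_Ico_consecutive _ (Nat.zero_le (m₁+1)) (by omega),
      ← Finset.range_eq_Ico, Finset.sum_range_succ]
  have hhead : ∑ m ∈ Finset.range m₁, FF u (2*m+2) = m₁ := by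
    rw [Finset.sum_congr rfl hones, Finset.sum_const, Finset.card_range, smul_eq_mul, mul_one]
  obtain ⟨c, hc⟩ : ∃ c, k = m₁ + c := ⟨k - m₁, by omega⟩
  have hS : (∑ m ∈ Finset.Ico (m₁+1) (k+1), (FF u (2*m+2) + 1)) ≤ c * a := by
    refine (sumG_le u _ (fun m hm => by rw [Finset.mem_Ico] at hm; omega)).trans ?_
    rw [Nat.card_Ico]
    apply Nat.mul_le_mul_right
    omega
  rw [Finset.sum_add_distrib, Finset.sum_const, Nat.card_Ico, smul_eq_mul, mul_one] at hS
  have hcard : (k+1-(m₁+1) : ℕ) = c := by omega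
  rw [hcard] at hS
  have key : a*(k+1) = a*m₁ + c*a + a := by rw [hc]; ring
  have h2c : 2*c ≤ c*a := by rw [mul_comm c a]; exact Nat.mul_le_mul_right c ha
  have h2m : 2*m₁ ≤ a*m₁ := Nat.mul_le_mul_right m₁ ha
  rw [hsplit, hhead] at hbase
  linarith

open Classical in
noncomputable def phi (s a k : ℕ) (p : (Fin (2*k+3) → Fin a) × Fin (2*k+3)) :
    (Fin (2*k+3) → Fin a) × Fin (2*k+3) :=
  if ValidGen s a (2*k+1) (face (2*k+1) p.2 (gg p.1)) then
    if hj : (p.2 : ℕ) % 2 = 0 then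
      if hex : (Finset.univ.filter fun t : Fin (2*k+3) =>
          (p.2 : ℕ) + 1 < (t : ℕ) ∧ (t : ℕ) % 2 = 0 ∧ 2 ≤ (p.1 t : ℕ)).Nonempty then
        let t := Finset.min' _ hex
        (moveOne p.1 t p.2, ⟨(t : ℕ) - 1, Nat.lt_of_le_of_lt (Nat.sub_le _ _) t.isLt⟩)
      else p
    else
      let Q := Finset.univ.filter fun q : Fin (2*k+3) =>
          (q : ℕ) < (p.2 : ℕ) ∧ (q : ℕ) % 2 = 0 ∧ 2 ≤ (p.1 q : ℕ)
      let t' := if hq : Q.Nonempty then Q.max' hq else (0 : Fin (2*k+3))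
      (moveOne p.1 t' ⟨(p.2 : ℕ) + 1, by have := p.2.isLt; omega⟩, t')
  else p


lemma FF_moveOne {a k : ℕ} (u : Fin (2*k+3) → Fin a) (tq jq : Fin (2*k+3))
    (hwrap : (u jq : ℕ) + 1 < a) (n : ℕ) (h : n < 2*k+3) :
    FF (moveOne u tq jq) n = if n = (jq : ℕ) then FF u n + 1
      else if n = (tq : ℕ) then FF u n - 1 else FF u n := by
  have hm := moveOne_val u tq jq ⟨n, h⟩
  have hFF : FF u n = (u ⟨n, h⟩ : ℕ) := by unfold FF; rw [dif_pos h]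
  have hFF' : FF (moveOne u tq jq) n = ((moveOne u tq jq) ⟨n, h⟩ : ℕ) := by
    unfold FF; rw [dif_pos h]
  simp only [show ((⟨n, h⟩ : Fin (2*k+3)) : ℕ) = n from rfl] at hm
  rw [hFF', hm]
  by_cases h1 : n = (jq : ℕ)
  · have hjq : (⟨n, h⟩ : Fin (2*k+3)) = jq := Fin.ext h1
    rw [if_pos h1, if_pos h1, hFF, hjq, Nat.mod_eq_of_lt hwrap]
  · rw [if_neg h1, if_neg h1]
    by_cases h2 : n = (tq : ℕ)
    · rw [if_pos h2, if_pos h2, hFF]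
    · rw [if_neg h2, if_neg h2, hFF]

lemma moveOne_eq_of_ne {a k : ℕ} (u : Fin (2*k+3) → Fin a) (tq jq i : Fin (2*k+3))
    (h1 : i ≠ jq) (h2 : i ≠ tq) : moveOne u tq jq i = u i := by
  unfold moveOne; rw [if_neg h1, if_neg h2]

lemma sum_moveOne {a k : ℕ} (u : Fin (2*k+3) → Fin a) (tq jq : Fin (2*k+3))
    (hne : tq ≠ jq) (hwrap : (u jq : ℕ) + 1 < a) (hpos : 1 ≤ (u tq : ℕ)) :
    (∑ i, ((moveOne u tq jq) i : ℕ)) = ∑ i, (u i : ℕ) := by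
  have key : ∀ v : Fin (2*k+3) → Fin a, (∑ i, (v i : ℕ))
      = (∑ i ∈ (Finset.univ.erase jq).erase tq, (v i : ℕ)) + (v tq : ℕ) + (v jq : ℕ) := by
    intro v
    rw [Finset.sum_erase_add _ _ (Finset.mem_erase.2 ⟨hne, Finset.mem_univ tq⟩),
      Finset.sum_erase_add _ _ (Finset.mem_univ jq)]
  rw [key, key u]
  have h1 : ∀ i ∈ (Finset.univ.erase jq).erase tq,
      ((moveOne u tq jq) i : ℕ) = (u i : ℕ) := by
    intro i hi
    rw [Finset.mem_erase, Finset.mem_erase] at hi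
    rw [moveOne_eq_of_ne u tq jq i hi.2.1 hi.1]
  rw [Finset.sum_congr rfl h1]
  have h2 : ((moveOne u tq jq) tq : ℕ) = (u tq : ℕ) - 1 := by
    rw [moveOne_val]
    rw [if_neg (by simpa [Fin.ext_iff] using hne), if_pos rfl]
  have h3 : ((moveOne u tq jq) jq : ℕ) = (u jq : ℕ) + 1 := by
    rw [moveOne_val, if_pos rfl, Nat.mod_eq_of_lt hwrap]
  rw [h2, h3]
  omega

lemma MemU_moveOne {s a k : ℕ} {u : Fin (2*k+3) → Fin a} (hu : MemU s a k u)
    (tq jq : Fin (2*k+3)) (hne : tq ≠ jq) (htq : (tq : ℕ) % 2 = 0) (hjq : (jq : ℕ) % 2 = 0)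
    (hwrap : (u jq : ℕ) + 1 < a) (hpos1 : 1 ≤ (u tq : ℕ))
    (hpos2 : (tq : ℕ) ≠ 0 → 2 ≤ (u tq : ℕ))
    (hzero : (jq : ℕ) = 0 → (u 0 : ℕ) + 3 ≤ a) :
    MemU s a k (moveOne u tq jq) := by
  have hval : ∀ m : Fin (2*k+3), ((moveOne u tq jq) m : ℕ) =
      if (m : ℕ) = (jq : ℕ) then (u m : ℕ) + 1
      else if (m : ℕ) = (tq : ℕ) then (u m : ℕ) - 1 else (u m : ℕ) := by
    intro m
    rw [moveOne_val]
    by_cases h1 : (m : ℕ) = (jq : ℕ)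
    · rw [if_pos h1, if_pos h1]
      have : m = jq := Fin.ext h1
      rw [this, Nat.mod_eq_of_lt hwrap]
    · rw [if_neg h1, if_neg h1]
  refine ⟨?_, ?_, ?_, ?_⟩
  · intro i hi
    rw [Nat.odd_iff] at hi
    rw [hval, if_neg (by omega), if_neg (by omega)]
    exact hu.1 i (by rw [Nat.odd_iff]; exact hi)
  · intro i hi0 hie
    rw [Nat.even_iff] at hie
    have hi0' : (i : ℕ) ≠ 0 := fun h => hi0 (Fin.ext h)
    rw [hval]
    by_cases h1 : (i : ℕ) = (jq : ℕ)
    · rw [if_pos h1]; omega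
    · rw [if_neg h1]
      by_cases h2 : (i : ℕ) = (tq : ℕ)
      · rw [if_pos h2]
        have := hpos2 (by omega)
        have : (u i : ℕ) = (u tq : ℕ) := by rw [Fin.ext h2]
        omega
      · rw [if_neg h2]
        exact hu.2.1 i hi0 (by rw [Nat.even_iff]; exact hie)
  · rw [hval]
    have h0v : ((0 : Fin (2*k+3)) : ℕ) = 0 := rfl
    rw [h0v]
    by_cases h1 : 0 = (jq : ℕ)
    · rw [if_pos h1]
      have := hzero h1.symm
      omega
    · rw [if_neg h1]
      by_cases h2 : 0 = (tq : ℕ)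
      · rw [if_pos h2]
        have := hu.2.2.1
        omega
      · rw [if_neg h2]
        exact hu.2.2.1
  · rw [sum_moveOne u tq jq hne hwrap hpos1]
    exact hu.2.2.2

lemma moveOne_inv {a k : ℕ} (u : Fin (2*k+3) → Fin a) (tq jq : Fin (2*k+3))
    (hne : tq ≠ jq) (hwrap : (u jq : ℕ) + 1 < a) (hpos : 1 ≤ (u tq : ℕ)) :
    moveOne (moveOne u tq jq) jq tq = u := by
  have hnv : (tq : ℕ) ≠ (jq : ℕ) := by simpa [Fin.ext_iff] using hne
  funext i
  apply Fin.ext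
  rw [moveOne_val]
  by_cases h1 : (i : ℕ) = (tq : ℕ)
  · rw [if_pos h1]
    have hi : i = tq := Fin.ext h1
    subst hi
    have h2 : ((moveOne u i jq) i : ℕ) = (u i : ℕ) - 1 := by
      rw [moveOne_val, if_neg hnv, if_pos rfl]
    rw [h2]
    have := (u i).isLt
    rw [Nat.sub_add_cancel hpos, Nat.mod_eq_of_lt this]
  · rw [if_neg h1]
    by_cases h2 : (i : ℕ) = (jq : ℕ)
    · rw [if_pos h2]
      have hi : i = jq := Fin.ext h2
      subst hi
      have h3 : ((moveOne u tq i) i : ℕ) = (u i : ℕ) + 1 := by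
        rw [moveOne_val, if_pos rfl, Nat.mod_eq_of_lt hwrap]
      rw [h3]
      omega
    · rw [if_neg h2]
      rw [moveOne_eq_of_ne u tq jq i (fun h => h2 (by rw [h])) (fun h => h1 (by rw [h]))]


lemma E2face {s a k : ℕ} {u : Fin (2*k+3) → Fin a} (hu : MemU s a k u)
    (j t : Fin (2*k+3)) (hj2 : (j : ℕ) % 2 = 0) (ht2 : (t : ℕ) % 2 = 0)
    (hjt : (j : ℕ) + 1 < (t : ℕ))
    (hbet : ∀ n, (j : ℕ) < n → n < (t : ℕ) → n < 2*k+3 → FF u n = 1)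
    (hwrap : (u j : ℕ) + 1 < a) (ht1 : 1 ≤ FF u (t : ℕ)) :
    face (2*k+1) (⟨(t : ℕ) - 1, Nat.lt_of_le_of_lt (Nat.sub_le _ _) t.isLt⟩ : Fin (2*k+3))
      (gg (moveOne u t j)) = face (2*k+1) j (gg u) := by
  have htlt := t.isLt
  have hjlt := j.isLt
  rw [show gg (moveOne u t j) = ((0:ℕ), fun i => ((moveOne u t j) i : ℕ)) from rfl,
    show (gg u) = ((0:ℕ), fun i => (u i : ℕ)) from rfl,
    face_eq_M _ _ (by simp; omega), face_eq_M _ j (by omega)]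
  refine Prod.ext rfl ?_
  funext i
  show M (fun i => ((moveOne u t j) i : ℕ)) _ i = M (fun i => (u i : ℕ)) _ i
  rw [M_FF, M_FF]
  have hival := i.isLt
  have hmv : ∀ n, n < 2*k+3 → FF (moveOne u t j) n = if n = (j : ℕ) then FF u n + 1
      else if n = (t : ℕ) then FF u n - 1 else FF u n := FF_moveOne u t j hwrap
  have htv : ((⟨(t : ℕ) - 1, Nat.lt_of_le_of_lt (Nat.sub_le _ _) t.isLt⟩ :
      Fin (2*k+3)) : ℕ) = (t : ℕ) - 1 := rfl
  rw [htv]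
  rcases Nat.lt_trichotomy (i : ℕ) (j : ℕ) with hc | hc | hc
  · rw [if_pos (by omega), if_pos hc, hmv _ (by omega), if_neg (by omega),
      if_neg (by omega)]
  · rw [hc, if_pos (by omega), if_neg (by omega), if_pos rfl, hmv _ (by omega),
      if_pos rfl]
    have := hbet ((j:ℕ)+1) (by omega) (by omega) (by omega)
    omega
  · rcases Nat.lt_trichotomy (i : ℕ) ((t : ℕ) - 1) with hd | hd | hd
    · rw [if_pos hd, if_neg (by omega), if_neg (by omega), hmv _ (by omega),
        if_neg (by omega), if_neg (by omega)]
      have h1 := hbet (i:ℕ) (by omega) (by omega) (by omega)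
      have h2 := hbet ((i:ℕ)+1) (by omega) (by omega) (by omega)
      omega
    · rw [hd, show (t:ℕ)-1+1 = (t:ℕ) from by omega, if_neg (by omega), if_pos rfl,
        if_neg (by omega), if_neg (by omega), hmv _ (by omega), if_neg (by omega),
        if_neg (by omega), hmv _ (by omega), if_neg (by omega), if_pos rfl]
      have h1 := hbet ((t:ℕ)-1) (by omega) (by omega) (by omega)
      omega
    · rw [if_neg (by omega), if_neg (by omega), if_neg (by omega), if_neg (by omega),
        hmv _ (by omega), if_neg (by omega), if_neg (by omega)]

lemma O2face {s a k : ℕ} {u : Fin (2*k+3) → Fin a} (hu : MemU s a k u)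
    (j t' : Fin (2*k+3)) (hj2 : (j : ℕ) % 2 = 1) (ht2 : (t' : ℕ) % 2 = 0)
    (ht'j : (t' : ℕ) < (j : ℕ)) (hjle : (j : ℕ) ≤ 2*k+1)
    (hbet : ∀ n, (t' : ℕ) < n → n ≤ (j : ℕ) → n < 2*k+3 → FF u n = 1)
    (hwrap : (u (⟨(j:ℕ)+1, by omega⟩ : Fin (2*k+3)) : ℕ) + 1 < a)
    (ht1 : 1 ≤ FF u (t' : ℕ)) :
    face (2*k+1) t' (gg (moveOne u t' (⟨(j:ℕ)+1, by omega⟩ : Fin (2*k+3))))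
      = face (2*k+1) j (gg u) := by
  have htlt := t'.isLt
  set jp1 : Fin (2*k+3) := ⟨(j:ℕ)+1, by omega⟩ with hjp1
  rw [show gg (moveOne u t' jp1) = ((0:ℕ), fun i => ((moveOne u t' jp1) i : ℕ)) from rfl,
    show (gg u) = ((0:ℕ), fun i => (u i : ℕ)) from rfl,
    face_eq_M _ _ (by omega), face_eq_M _ j (by omega)]
  refine Prod.ext rfl ?_
  funext i
  show M (fun i => ((moveOne u t' jp1) i : ℕ)) _ i = M (fun i => (u i : ℕ)) _ i
  rw [M_FF, M_FF]
  have hival := i.isLt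
  have hjp1v : ((jp1 : Fin (2*k+3)) : ℕ) = (j : ℕ) + 1 := rfl
  have hmv : ∀ n, n < 2*k+3 → FF (moveOne u t' jp1) n = if n = ((j : ℕ)+1) then FF u n + 1
      else if n = (t' : ℕ) then FF u n - 1 else FF u n := by
    intro n h
    rw [FF_moveOne u t' jp1 hwrap n h, hjp1v]
  rcases Nat.lt_trichotomy (i : ℕ) (t' : ℕ) with hc | hc | hc
  · rw [if_pos hc, if_pos (by omega), hmv _ (by omega), if_neg (by omega),
      if_neg (by omega)]
  · rw [hc, if_neg (by omega), if_pos rfl, if_pos (by omega), hmv _ (by omega),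
      if_neg (by omega), if_pos rfl, hmv _ (by omega), if_neg (by omega),
      if_neg (by omega)]
    have h1 := hbet ((t':ℕ)+1) (by omega) (by omega) (by omega)
    omega
  · rcases Nat.lt_trichotomy (i : ℕ) (j : ℕ) with hd | hd | hd
    · rw [if_neg (by omega), if_neg (by omega), if_pos hd, hmv _ (by omega),
        if_neg (by omega), if_neg (by omega)]
      have h1 := hbet (i:ℕ) (by omega) (by omega) (by omega)
      have h2 := hbet ((i:ℕ)+1) (by omega) (by omega) (by omega)
      omega
    · rw [hd, if_neg (by omega), if_neg (by omega), if_neg (by omega), if_pos rfl,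
        hmv _ (by omega), if_pos rfl]
      have h1 := hbet (j:ℕ) (by omega) (by omega) (by omega)
      omega
    · rw [if_neg (by omega), if_neg (by omega), if_neg (by omega), if_neg (by omega),
        hmv _ (by omega), if_neg (by omega), if_neg (by omega)]


lemma moveOne_val' {a k : ℕ} (u : Fin (2*k+3) → Fin a) (tq jq : Fin (2*k+3))
    (hwrap : (u jq : ℕ) + 1 < a) (m : Fin (2*k+3)) :
    ((moveOne u tq jq) m : ℕ) = if (m : ℕ) = (jq : ℕ) then (u m : ℕ) + 1
      else if (m : ℕ) = (tq : ℕ) then (u m : ℕ) - 1 else (u m : ℕ) := by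
  rw [moveOne_val]
  by_cases h1 : (m : ℕ) = (jq : ℕ)
  · rw [if_pos h1, if_pos h1, Fin.ext h1, Nat.mod_eq_of_lt hwrap]
  · rw [if_neg h1, if_neg h1]

def oddT {a k : ℕ} (u : Fin (2*k+3) → Fin a) (j : Fin (2*k+3)) : Fin (2*k+3) :=
  if hq : (Finset.univ.filter fun q : Fin (2*k+3) =>
      (q : ℕ) < (j : ℕ) ∧ (q : ℕ) % 2 = 0 ∧ 2 ≤ (u q : ℕ)).Nonempty
  then Finset.max' _ hq else 0

lemma phi_invalid {s a k : ℕ} (p : (Fin (2*k+3) → Fin a) × Fin (2*k+3))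
    (hv : ¬ ValidGen s a (2*k+1) (face (2*k+1) p.2 (gg p.1))) :
    phi s a k p = p := by
  unfold phi; rw [if_neg hv]

lemma phi_even_eval {s a k : ℕ} (u : Fin (2*k+3) → Fin a) (j : Fin (2*k+3))
    (hv : ValidGen s a (2*k+1) (face (2*k+1) j (gg u))) (hj2 : (j : ℕ) % 2 = 0)
    (hex : (Finset.univ.filter fun t : Fin (2*k+3) =>
      (j : ℕ) + 1 < (t : ℕ) ∧ (t : ℕ) % 2 = 0 ∧ 2 ≤ (u t : ℕ)).Nonempty) :
    phi s a k (u, j) = (moveOne u (Finset.min' _ hex) j,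
      ⟨((Finset.min' _ hex : Fin (2*k+3)) : ℕ) - 1,
        Nat.lt_of_le_of_lt (Nat.sub_le _ _) (Finset.min' _ hex).isLt⟩) := by
  unfold phi
  rw [if_pos hv, dif_pos hj2, dif_pos hex]

lemma phi_odd_eval {s a k : ℕ} (u : Fin (2*k+3) → Fin a) (j : Fin (2*k+3))
    (hv : ValidGen s a (2*k+1) (face (2*k+1) j (gg u))) (hj2 : ¬ ((j : ℕ) % 2 = 0)) :
    phi s a k (u, j) = (moveOne u (oddT u j)
      ⟨(j : ℕ) + 1, by have := j.isLt; omega⟩, oddT u j) := by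
  unfold phi oddT
  rw [if_pos hv, dif_neg hj2]

lemma even_main {s a k : ℕ} (ha : 2 ≤ a) (hak : a*(k+1) ≤ s-1)
    {u : Fin (2*k+3) → Fin a} (hu : MemU s a k u) (j : Fin (2*k+3))
    (hj2 : (j : ℕ) % 2 = 0)
    (hv : ValidGen s a (2*k+1) (face (2*k+1) j (gg u))) :
    MemU s a k (phi s a k (u, j)).1 ∧
    face (2*k+1) (phi s a k (u, j)).2 (gg (phi s a k (u, j)).1) = face (2*k+1) j (gg u) ∧
    ((phi s a k (u, j)).2 : ℕ) % 2 = 1 ∧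
    phi s a k (phi s a k (u, j)) = (u, j) := by
  have hex := L2 ha hak hu j hj2 hv
  have htmem := Finset.min'_mem _ hex
  rw [Finset.mem_filter] at htmem
  obtain ⟨-, htgt, ht2, ht_ge2⟩ := htmem
  set t := Finset.min' _ hex with htdef
  have htlt := t.isLt
  have hjlt := j.isLt
  have hjle : (j : ℕ) ≤ 2*k := by omega
  have hwrap : (u j : ℕ) + 1 < a := by
    rcases Nat.eq_zero_or_pos (j : ℕ) with h0 | h1
    · have hm := valid_merge0 j h0 hv
      have hF0 : FF u 0 = (u 0 : ℕ) := FF_zero u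
      have hjj : (u j : ℕ) = (u 0 : ℕ) := by
        rw [show j = (0 : Fin (2*k+3)) from Fin.ext h0]
      omega
    · have hm := valid_mergeM j h1 (by omega) hv
      have h1' : FF u ((j:ℕ)+1) = 1 := FF_odd hu _ (by omega) (by omega)
      have h2' : FF u (j:ℕ) = (u j : ℕ) := FF_eq u j
      omega
  have hzero : (j : ℕ) = 0 → (u 0 : ℕ) + 3 ≤ a := by
    intro h0
    have hm := valid_merge0 j h0 hv
    have hFF1 : FF u 1 = 1 := FF_odd hu 1 (by omega) (by omega)
    have hF0 : FF u 0 = (u 0 : ℕ) := FF_zero u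
    omega
  have hbetF : ∀ i : Fin (2*k+3), (j:ℕ) < (i:ℕ) → (i:ℕ) < (t:ℕ) → (u i : ℕ) = 1 := by
    intro i h1 h2
    rcases Nat.even_or_odd (i : ℕ) with he | ho
    · rw [Nat.even_iff] at he
      by_contra hne
      have hge2 : 2 ≤ (u i : ℕ) := by
        have := hu.2.1 i (fin_ne0 _ (by omega)) (by rw [Nat.even_iff]; exact he)
        omega
      have hmem : i ∈ Finset.univ.filter (fun x : Fin (2*k+3) =>
          (j:ℕ)+1 < (x:ℕ) ∧ (x:ℕ)%2 = 0 ∧ 2 ≤ (u x : ℕ)) :=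
        Finset.mem_filter.2 ⟨Finset.mem_univ _, by omega, he, hge2⟩
      have hle := Finset.min'_le _ i hmem
      rw [← htdef, Fin.le_def] at hle
      omega
    · exact hu.1 i ho
  have hbet : ∀ n, (j:ℕ) < n → n < (t:ℕ) → n < 2*k+3 → FF u n = 1 := by
    intro n h1 h2 h3
    have := hbetF ⟨n, h3⟩ (by simpa using h1) (by simpa using h2)
    unfold FF; rw [dif_pos h3]; exact this
  have htne : t ≠ j := by simp [Fin.ext_iff]; omega
  have hpos1 : 1 ≤ (u t : ℕ) := by omega
  have hE1 : MemU s a k (moveOne u t j) :=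
    MemU_moveOne hu t j htne ht2 hj2 hwrap hpos1 (fun _ => ht_ge2) hzero
  have hE2 := E2face hu j t hj2 ht2 htgt hbet hwrap (by rw [FF_eq]; omega)
  rw [phi_even_eval u j hv hj2 hex, ← htdef]
  set tm1 : Fin (2*k+3) := ⟨(t : ℕ) - 1,
    Nat.lt_of_le_of_lt (Nat.sub_le _ _) t.isLt⟩ with htm1
  have htm1v : ((tm1 : Fin (2*k+3)) : ℕ) = (t : ℕ) - 1 := rfl
  refine ⟨hE1, hE2, by rw [htm1v]; omega, ?_⟩
  -- roundtrip
  have hv' : ValidGen s a (2*k+1) (face (2*k+1) tm1 (gg (moveOne u t j))) := by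
    rw [hE2]; exact hv
  rw [phi_odd_eval (moveOne u t j) tm1 hv' (by rw [htm1v]; omega)]
  have hval' := moveOne_val' u t j hwrap
  have hT : oddT (moveOne u t j) tm1 = j := by
    unfold oddT
    rcases Nat.eq_zero_or_pos (u j : ℕ) with hz | hp
    · -- u j = 0 forces j = 0, and the filter is empty
      have hj0 : (j : ℕ) = 0 := by
        by_contra h0
        have := hu.2.1 j (fin_ne0 _ (by omega)) (by rw [Nat.even_iff]; exact hj2)
        omega
      rw [dif_neg]
      · exact (Fin.ext hj0.symm)
      · rintro ⟨x, hx⟩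
        rw [Finset.mem_filter] at hx
        obtain ⟨-, hx1, hx2, hx3⟩ := hx
        rw [htm1v] at hx1
        have hxv := hval' x
        by_cases hxj : (x : ℕ) = (j : ℕ)
        · rw [if_pos hxj] at hxv
          have : (u x : ℕ) = (u j : ℕ) := by rw [Fin.ext hxj]
          omega
        · rw [if_neg hxj, if_neg (by omega)] at hxv
          have := hbetF x (by omega) (by omega)
          omega
    · have hjmem : j ∈ Finset.univ.filter (fun q : Fin (2*k+3) =>
          (q : ℕ) < (tm1 : ℕ) ∧ (q : ℕ) % 2 = 0 ∧ 2 ≤ ((moveOne u t j) q : ℕ)) := by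
        refine Finset.mem_filter.2 ⟨Finset.mem_univ _, ?_, hj2, ?_⟩
        · rw [htm1v]; omega
        · rw [hval', if_pos rfl]; omega
      rw [dif_pos ⟨j, hjmem⟩]
      refine le_antisymm (Finset.max'_le _ _ _ ?_) (Finset.le_max' _ j hjmem)
      intro x hx
      rw [Finset.mem_filter] at hx
      obtain ⟨-, hx1, hx2, hx3⟩ := hx
      rw [htm1v] at hx1
      rw [Fin.le_def]
      by_contra hgt
      have hxj : (j : ℕ) < (x : ℕ) := by omega
      have hxv := hval' x
      rw [if_neg (by omega), if_neg (by omega)] at hxv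
      have := hbetF x (by omega) (by omega)
      omega
  rw [hT]
  have hjp : (⟨((tm1 : Fin (2*k+3)) : ℕ) + 1, by have := tm1.isLt; omega⟩ : Fin (2*k+3)) = t := by
    apply Fin.ext
    show ((t : ℕ) - 1) + 1 = (t : ℕ)
    omega
  rw [hjp]
  rw [moveOne_inv u t j htne hwrap hpos1]

lemma odd_main {s a k : ℕ} (ha : 2 ≤ a) (hak : a*(k+1) ≤ s-1)
    {u : Fin (2*k+3) → Fin a} (hu : MemU s a k u) (j : Fin (2*k+3))
    (hj2 : (j : ℕ) % 2 = 1)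
    (hv : ValidGen s a (2*k+1) (face (2*k+1) j (gg u))) :
    MemU s a k (phi s a k (u, j)).1 ∧
    face (2*k+1) (phi s a k (u, j)).2 (gg (phi s a k (u, j)).1) = face (2*k+1) j (gg u) ∧
    ((phi s a k (u, j)).2 : ℕ) % 2 = 0 ∧
    phi s a k (phi s a k (u, j)) = (u, j) := by
  have hjlt := j.isLt
  have hjle : (j : ℕ) ≤ 2*k+1 := by omega
  set jp1 : Fin (2*k+3) := ⟨(j : ℕ) + 1, by omega⟩ with hjp1def
  have hjp1v : ((jp1 : Fin (2*k+3)) : ℕ) = (j : ℕ) + 1 := rfl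
  have hwrapj1 : (u jp1 : ℕ) + 1 < a := by
    have hm := valid_mergeM j (by omega) hjle hv
    have h1' : FF u (j:ℕ) = 1 := FF_odd hu _ (by omega) (by omega)
    have h2' : FF u ((j:ℕ)+1) = (u jp1 : ℕ) := by
      unfold FF; rw [dif_pos (by omega)]
    omega
  set t' := oddT u j with ht'def
  have hQfacts : ((t' : ℕ) % 2 = 0 ∧ (t' : ℕ) < (j : ℕ) ∧ 1 ≤ (u t' : ℕ)
      ∧ ((t' : ℕ) ≠ 0 → 2 ≤ (u t' : ℕ))) := by
    rw [ht'def]; unfold oddT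
    by_cases hq : (Finset.univ.filter fun q : Fin (2*k+3) =>
        (q : ℕ) < (j : ℕ) ∧ (q : ℕ) % 2 = 0 ∧ 2 ≤ (u q : ℕ)).Nonempty
    · rw [dif_pos hq]
      have hm := Finset.max'_mem _ hq
      rw [Finset.mem_filter] at hm
      exact ⟨hm.2.2.1, hm.2.1, by omega, fun _ => hm.2.2.2⟩
    · rw [dif_neg hq]
      have h0v : (((0 : Fin (2*k+3)) : Fin (2*k+3)) : ℕ) = 0 := rfl
      refine ⟨by rw [h0v], by rw [h0v]; omega, L3 ha hak hu j hj2 hv hq, ?_⟩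
      rw [h0v]; omega
  obtain ⟨ht'2, ht'lt, ht'pos, ht'pos2⟩ := hQfacts
  have hbetF : ∀ i : Fin (2*k+3), (t':ℕ) < (i:ℕ) → (i:ℕ) ≤ (j:ℕ) → (u i : ℕ) = 1 := by
    intro i h1 h2
    rcases Nat.even_or_odd (i : ℕ) with he | ho
    · rw [Nat.even_iff] at he
      by_contra hne
      have hge2 : 2 ≤ (u i : ℕ) := by
        have := hu.2.1 i (fin_ne0 _ (by omega)) (by rw [Nat.even_iff]; exact he)
        omega
      have hilt : (i : ℕ) < (j : ℕ) := by omega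
      have hmem : i ∈ Finset.univ.filter (fun q : Fin (2*k+3) =>
          (q : ℕ) < (j : ℕ) ∧ (q : ℕ) % 2 = 0 ∧ 2 ≤ (u q : ℕ)) :=
        Finset.mem_filter.2 ⟨Finset.mem_univ _, hilt, he, hge2⟩
      have hmax := Finset.le_max' _ i hmem
      have ht'eq : t' = Finset.max' _ ⟨i, hmem⟩ := by
        rw [ht'def]; unfold oddT; rw [dif_pos ⟨i, hmem⟩]
      rw [← ht'eq, Fin.le_def] at hmax
      omega
    · exact hu.1 i ho
  have hbet : ∀ n, (t':ℕ) < n → n ≤ (j:ℕ) → n < 2*k+3 → FF u n = 1 := by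
    intro n h1 h2 h3
    have := hbetF ⟨n, h3⟩ (by simpa using h1) (by simpa using h2)
    unfold FF; rw [dif_pos h3]; exact this
  have hne : t' ≠ jp1 := by simp [Fin.ext_iff, hjp1v]; omega
  have hO1 : MemU s a k (moveOne u t' jp1) := by
    refine MemU_moveOne hu t' jp1 hne ht'2 (by rw [hjp1v]; omega) hwrapj1 ht'pos ht'pos2 ?_
    intro h0; rw [hjp1v] at h0; omega
  have hO2 : face (2*k+1) t' (gg (moveOne u t' jp1)) = face (2*k+1) j (gg u) := by
    have := O2face hu j t' hj2 ht'2 ht'lt hjle hbet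
      (by exact hwrapj1) (by
        have : FF u (t':ℕ) = (u t' : ℕ) := FF_eq u t'
        omega)
    exact this
  rw [phi_odd_eval u j hv (by omega), ← ht'def, ← hjp1def]
  refine ⟨hO1, hO2, ht'2, ?_⟩
  have hv'' : ValidGen s a (2*k+1) (face (2*k+1) t' (gg (moveOne u t' jp1))) := by
    rw [hO2]; exact hv
  have hval'' := moveOne_val' u t' jp1 hwrapj1
  have hjmem : jp1 ∈ Finset.univ.filter (fun x : Fin (2*k+3) =>
      (t' : ℕ) + 1 < (x : ℕ) ∧ (x : ℕ) % 2 = 0 ∧ 2 ≤ ((moveOne u t' jp1) x : ℕ)) := by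
    refine Finset.mem_filter.2 ⟨Finset.mem_univ _, by rw [hjp1v]; omega,
      by rw [hjp1v]; omega, ?_⟩
    rw [hval'', if_pos rfl]
    have : 1 ≤ (u jp1 : ℕ) := by
      have := hu.2.1 jp1 (fin_ne0 _ (by rw [hjp1v]; omega)) (by rw [Nat.even_iff, hjp1v]; omega)
      omega
    omega
  have hex'' : (Finset.univ.filter fun x : Fin (2*k+3) =>
      (t' : ℕ) + 1 < (x : ℕ) ∧ (x : ℕ) % 2 = 0 ∧ 2 ≤ ((moveOne u t' jp1) x : ℕ)).Nonempty :=
    ⟨jp1, hjmem⟩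
  rw [phi_even_eval (moveOne u t' jp1) t' hv'' ht'2 hex'']
  have hmin : Finset.min' _ hex'' = jp1 := by
    refine le_antisymm (Finset.min'_le _ _ hjmem) (Finset.le_min' _ _ _ ?_)
    intro x hx
    rw [Finset.mem_filter] at hx
    obtain ⟨-, hx1, hx2, hx3⟩ := hx
    rw [Fin.le_def, hjp1v]
    by_contra hgt
    have hxv := hval'' x
    rw [if_neg (by rw [hjp1v]; omega), if_neg (by omega)] at hxv
    have := hbetF x (by omega) (by omega)
    omega
  rw [hmin]
  refine Prod.ext ?_ ?_
  · show moveOne (moveOne u t' jp1) jp1 t' = u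
    exact moveOne_inv u t' jp1 hne hwrapj1 ht'pos
  · show (⟨((jp1 : Fin (2*k+3)) : ℕ) - 1, _⟩ : Fin (2*k+3)) = j
    apply Fin.ext
    show ((j : ℕ) + 1) - 1 = (j : ℕ)
    omega


lemma sign_cancel {m n : ℕ} (h : m % 2 ≠ n % 2) : ((-1:ℤ)^m + (-1:ℤ)^n = 0) := by
  rcases Nat.mod_two_eq_zero_or_one m with hm | hm <;>
    rcases Nat.mod_two_eq_zero_or_one n with hn | hn
  · omega
  · rw [Even.neg_one_pow (Nat.even_iff.2 hm), Odd.neg_one_pow (Nat.odd_iff.2 hn)]; ring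
  · rw [Odd.neg_one_pow (Nat.odd_iff.2 hm), Even.neg_one_pow (Nat.even_iff.2 hn)]; ring
  · omega

open Classical in
lemma invol {s a k : ℕ} (ha : 2 ≤ a) (hak : a*(k+1) ≤ s-1)
    (T : Finset (Fin (2*k+3) → Fin a)) (hT : ∀ u, u ∈ T ↔ MemU s a k u) :
    ∑ p ∈ T ×ˢ (Finset.univ : Finset (Fin (2*k+3))),
      ((-1 : ℤ) ^ (p.2 : ℕ)) • (if ValidGen s a (2*k+1) (face (2*k+1) p.2 (gg p.1))
        then Finsupp.single (face (2*k+1) p.2 (gg p.1)) (1:ℤ) else 0) = 0 := by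
  apply Finset.sum_involution (fun p _ => phi s a k p)
  · -- cancellation
    rintro ⟨u, j⟩ hp
    have hu : MemU s a k u := (hT u).1 (Finset.mem_product.1 hp).1
    by_cases hv : ValidGen s a (2*k+1) (face (2*k+1) j (gg u))
    · rcases Nat.mod_two_eq_zero_or_one (j : ℕ) with h2 | h2
      · obtain ⟨hm1, hm2, hm3, hm4⟩ := even_main ha hak hu j h2 hv
        rw [hm2, if_pos hv, ← add_smul,
          sign_cancel (by rw [show ((u, j).2) = j from rfl]; omega), zero_smul]
      · obtain ⟨hm1, hm2, hm3, hm4⟩ := odd_main ha hak hu j h2 hv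
        rw [hm2, if_pos hv, ← add_smul,
          sign_cancel (by rw [show ((u, j).2) = j from rfl]; omega), zero_smul]
    · rw [phi_invalid (u, j) hv, if_neg hv, smul_zero, add_zero]
  · -- nontriviality
    rintro ⟨u, j⟩ hp hf
    have hu : MemU s a k u := (hT u).1 (Finset.mem_product.1 hp).1
    by_cases hv : ValidGen s a (2*k+1) (face (2*k+1) j (gg u))
    · rcases Nat.mod_two_eq_zero_or_one (j : ℕ) with h2 | h2
      · obtain ⟨hm1, hm2, hm3, hm4⟩ := even_main ha hak hu j h2 hv
        intro heq
        rw [heq, show ((u, j).2) = j from rfl] at hm3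
        omega
      · obtain ⟨hm1, hm2, hm3, hm4⟩ := odd_main ha hak hu j h2 hv
        intro heq
        rw [heq, show ((u, j).2) = j from rfl] at hm3
        omega
    · exact absurd (by rw [if_neg hv, smul_zero]) hf
  · -- membership
    rintro ⟨u, j⟩ hp
    have hu : MemU s a k u := (hT u).1 (Finset.mem_product.1 hp).1
    by_cases hv : ValidGen s a (2*k+1) (face (2*k+1) j (gg u))
    · rcases Nat.mod_two_eq_zero_or_one (j : ℕ) with h2 | h2
      · obtain ⟨hm1, hm2, hm3, hm4⟩ := even_main ha hak hu j h2 hv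
        exact Finset.mem_product.2 ⟨(hT _).2 hm1, Finset.mem_univ _⟩
      · obtain ⟨hm1, hm2, hm3, hm4⟩ := odd_main ha hak hu j h2 hv
        exact Finset.mem_product.2 ⟨(hT _).2 hm1, Finset.mem_univ _⟩
    · rw [phi_invalid (u, j) hv]; exact hp
  · -- involution
    rintro ⟨u, j⟩ hp
    have hu : MemU s a k u := (hT u).1 (Finset.mem_product.1 hp).1
    by_cases hv : ValidGen s a (2*k+1) (face (2*k+1) j (gg u))
    · rcases Nat.mod_two_eq_zero_or_one (j : ℕ) with h2 | h2
      · exact (even_main ha hak hu j h2 hv).2.2.2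
      · exact (odd_main ha hak hu j h2 hv).2.2.2
    · rw [phi_invalid (u, j) hv, phi_invalid (u, j) hv]

lemma Bd_succ_apply (s a e : ℕ) (c : Chain (e+1)) :
    Bd s a (e+1) c = c.sum fun g z => z • bdGen s a e g := rfl


end S12

/-- if `a ∤ s` and `d = ⌊(s−1)/a⌋`, the chain `ι_{2d}` is a cycle:
its simplicial boundary vanishes. -/
theorem stmt12 (s a : ℕ) (ha : 2 ≤ a) (hs : 0 < s) (hnd : ¬ a ∣ s) (d : ℕ)
    (hd : d = (s - 1) / a) :
    Bd s a (2 * d) (iotaEven s a d) = 0 := by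
  classical
  rcases Nat.eq_zero_or_pos d with h0 | h1
  · subst h0; rfl
  · obtain ⟨k, rfl⟩ : ∃ k, d = k + 1 := ⟨d - 1, by omega⟩
    have hak : a * (k+1) ≤ s - 1 := by
      rw [mul_comm, hd]
      exact Nat.div_mul_le_self (s-1) a
    rw [iotaEven]
    refine Eq.trans (S12.Bd_succ_apply s a (2*k+1) _) ?_
    rw [← Finsupp.sum_finset_sum_index (fun g => zero_smul ℤ (bdGen s a (2*k+1) g))
      (fun g z1 z2 => add_smul z1 z2 (bdGen s a (2*k+1) g))]
    have hterm : ∀ u : Fin (2*(k+1)+1) → Fin a,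
        ((Finsupp.single ((0, fun i => ((u i : ℕ))) : Gen (2*k+1+1)) (1:ℤ)).sum
          fun g z => z • bdGen s a (2*k+1) g)
        = ∑ j : Fin (2*k+3), ((-1:ℤ)^(j:ℕ)) •
            (if ValidGen s a (2*k+1) (face (2*k+1) j (S12.gg u))
             then Finsupp.single (face (2*k+1) j (S12.gg u)) (1:ℤ) else 0) := by
      intro u
      rw [Finsupp.sum_single_index (h := fun g z => z • bdGen s a (2*k+1) g)
        (zero_smul ℤ _), one_smul]
      rfl
    refine Eq.trans (Finset.sum_congr rfl (fun u _ => hterm u)) ?_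
    exact Eq.trans (Finset.sum_product' _ _ _).symm (S12.invol ha hak _
      (fun u => ⟨fun h => (Finset.mem_filter.1 h).2,
        fun h => Finset.mem_filter.2 ⟨Finset.mem_univ _, h⟩⟩))
end

section
/- The geometric realization of the pointed simplicial set X_{s,a} is homeomorphic to Δ^{s−1}/(C_s · Δ^{s−a}). -/
open CategoryTheory

/-- A monotone simplex `f : [m] → [s-1]` of the standard simplicial set
`Δ[s-1]` lands in one of the `s` cyclic translates of the face `Δ^{s-a}`
spanned by the first `s-a+1` vertices: its image is contained in the vertices
`i, i+1, …, i+(s-a)` (mod `s`) for some `i`.  (For `a > s` there is no such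
face.) -/
def Coll (s a : ℕ) {m : SimplexCategory} (f : m ⟶ SimplexCategory.mk (s - 1)) : Prop :=
  a ≤ s ∧ ∃ i : Fin (s - 1 + 1), ∀ j,
    ((f.toOrderHom j : ℕ) + (s - 1 + 1) - (i : ℕ)) % (s - 1 + 1) ≤ s - a

lemma coll_comp (s a : ℕ) {m m' : SimplexCategory} (φ : m' ⟶ m)
    (g : m ⟶ SimplexCategory.mk (s - 1)) (h : Coll s a g) : Coll s a (φ ≫ g) := by
  obtain ⟨h1, i, hi⟩ := h
  exact ⟨h1, i, fun j => hi (φ.toOrderHom j)⟩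

open Classical in
/-- The pointed simplicial set `X_{s,a}`: the quotient of `Δ^{s-1}` (generated
by the `(s-1)`-simplex `x₀ ⊗ x ⊗ … ⊗ x`) by the relations `x^a = *` and
`x^{i-1} x₀ x^{a-i} = *`, i.e. with all simplices lying in a cyclic translate
of the face `Δ^{s-a}` identified with the basepoint. -/
noncomputable def Xsa (s a : ℕ) : SSet where
  obj m := Option {f : m.unop ⟶ SimplexCategory.mk (s - 1) // ¬ Coll s a f}
  map θ := TypeCat.ofHom fun x => x.bind fun f =>
    if h : Coll s a (θ.unop ≫ f.1) then none else some ⟨θ.unop ≫ f.1, h⟩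
  map_id m := by
    ext x
    rcases x with _ | f
    · rfl
    · simp [f.2]
  map_comp {m m' m''} θ θ' := by
    ext x
    rcases x with _ | f
    · rfl
    · dsimp
      by_cases h : Coll s a (θ.unop ≫ f.1)
      · rw [dif_pos h, dif_pos (by simpa using coll_comp s a θ'.unop _ h)]
        rfl
      · rw [dif_neg h]
        dsimp
        by_cases h' : Coll s a (θ'.unop ≫ θ.unop ≫ f.1)
        · rw [dif_pos (by simpa using h'), dif_pos h']
        · rw [dif_neg (by simpa using h'), dif_neg h']
          simp

/-- The standard topological simplex `Δ^{s-1}` with vertices `0, …, s-1`. -/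
def Simp (s : ℕ) : Type := {f : Fin s → ℝ // f ∈ stdSimplex ℝ (Fin s)}

instance (s : ℕ) : TopologicalSpace (Simp s) := by unfold Simp; infer_instance

/-- Membership in `C_s · Δ^{s-a}`, the union of the `s` cyclic translates of
the face `Δ^{s-a}` spanned by the first `s-a+1` vertices (this set is empty
when `a > s`): `f` is supported on the vertices `i, i+1, …, i+(s-a)` (mod `s`)
for some `i`. -/
def InOrbitFace (s a : ℕ) (f : Simp s) : Prop :=
  a ≤ s ∧ ∃ i : Fin s, ∀ j : Fin s,
    s - a < ((j : ℕ) + s - (i : ℕ)) % s → f.1 j = 0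

/-- The pointed space `Δ^{s-1} ⊔ {*}`. -/
def SimpPt (s : ℕ) : Type := Simp s ⊕ PUnit

instance (s : ℕ) : TopologicalSpace (SimpPt s) := by unfold SimpPt; infer_instance

/-- The subset to be collapsed: `C_s · Δ^{s-a}` together with the basepoint. -/
def collapseSet (s a : ℕ) : Set (SimpPt s) :=
  Sum.inl '' {f | InOrbitFace s a f} ∪ {Sum.inr PUnit.unit}

/-- The setoid collapsing `collapseSet` to a point. -/
def collapseSetoid (s a : ℕ) : Setoid (SimpPt s) where
  r x y := x = y ∨ (x ∈ collapseSet s a ∧ y ∈ collapseSet s a)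
  iseqv := by
    constructor
    · exact fun x => Or.inl rfl
    · rintro x y (rfl | ⟨h1, h2⟩)
      · exact Or.inl rfl
      · exact Or.inr ⟨h2, h1⟩
    · rintro x y z (rfl | ⟨h1, h2⟩) (rfl | ⟨h3, h4⟩)
      · exact Or.inl rfl
      · exact Or.inr ⟨h3, h4⟩
      · exact Or.inr ⟨h1, h2⟩
      · exact Or.inr ⟨h1, h4⟩

/-- The quotient `Δ^{s-1}/(C_s · Δ^{s-a})`: the union of the cyclic translates
of the face `Δ^{s-a}` (together with the added basepoint) is collapsed to a
point.  (When `a > s` the face is empty, and this is `Δ^{s-1}` with a disjoint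
basepoint.) -/
def QuotSimp (s a : ℕ) : TopCat :=
  TopCat.of (Quotient (collapseSetoid s a))

namespace SimplexCategory

/-- Shim: the topological simplex as a type. -/
abbrev toTopObj (m : SimplexCategory) : Type := ULift.{0} (stdSimplex ℝ (Fin (m.len + 1)))

/-- Shim: the induced map of topological simplices. -/
noncomputable def toTopMap {m m' : SimplexCategory} (f : m ⟶ m') (w : m.toTopObj) : m'.toTopObj :=
  SimplexCategory.toTop.{0}.map f w

lemma coe_toTopMap {m m' : SimplexCategory} (f : m ⟶ m') (w : m.toTopObj) (j : Fin (m'.len + 1)) :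
    (toTopMap f w).down.1 j = ∑ k ∈ Finset.univ.filter (fun k => f.toOrderHom k = j), w.down.1 k := by
  classical
  show FunOnFinite.linearMap ℝ ℝ _ w.down.1 j = _
  rw [FunOnFinite.linearMap_apply_apply]
  rfl

lemma continuous_toTopMap {m m' : SimplexCategory} (f : m ⟶ m') : Continuous (toTopMap f) :=
  (SimplexCategory.toTop.{0}.map f).hom.continuous

lemma toTopMap_comp {m m' m'' : SimplexCategory} (f : m ⟶ m') (g : m' ⟶ m'') (w : m.toTopObj) :
    toTopMap (f ≫ g) w = toTopMap g (toTopMap f w) := by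
  unfold toTopMap
  rw [Functor.map_comp]
  rfl

lemma toTopMap_id (m : SimplexCategory) (w : m.toTopObj) : toTopMap (𝟙 m) w = w := by
  unfold toTopMap
  rw [CategoryTheory.Functor.map_id]
  rfl

end SimplexCategory

section AUX
open CategoryTheory.Limits SimplexCategory

variable {n a : ℕ}

/-- The key modular rotation quantity, as a `Fin` subtraction. -/
lemma rot_eq_sub (i j : Fin (n+1)) :
    ((j : ℕ) + (n+1) - (i : ℕ)) % (n+1) = ((j - i : Fin (n+1)) : ℕ) := by
  rw [Fin.sub_def]
  simp only []
  congr 1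
  omega

/-- The cyclic translate face, as a finset. -/
def faceT (n a : ℕ) (i : Fin (n+1)) : Finset (Fin (n+1)) :=
  Finset.univ.filter fun j => ((j : ℕ) + (n+1) - (i : ℕ)) % (n+1) ≤ n+1-a

lemma mem_faceT {i j : Fin (n+1)} :
    j ∈ faceT n a i ↔ ((j : ℕ) + (n+1) - (i : ℕ)) % (n+1) ≤ n+1-a := by
  simp [faceT]

lemma card_faceT (ha : a ≤ n+1) (ha0 : 0 < a) (i : Fin (n+1)) : (faceT n a i).card = n+1-a+1 := by
  have hlt : n+1-a < n+1 := by omega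
  have : faceT n a i = (Finset.Iic (⟨n+1-a, hlt⟩ : Fin (n+1))).image (fun k => k + i) := by
    ext j
    simp only [mem_faceT, Finset.mem_image, Finset.mem_Iic]
    constructor
    · intro hj
      refine ⟨j - i, ?_, by simp⟩
      rw [Fin.le_def]
      simpa [rot_eq_sub i j] using hj
    · rintro ⟨k, hk, rfl⟩
      rw [rot_eq_sub i (k + i)]
      simpa [Fin.le_def] using hk
  rw [this, Finset.card_image_of_injective _ (add_left_injective i), Fin.card_Iic]

end AUX

section AUX2
open CategoryTheory.Limits SimplexCategory
variable {n a : ℕ}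

/-- The homeomorphism between the mathlib topological simplex (with `ℝ≥0` coordinates)
and `Simp (n+1)` (with real coordinates). -/
def tHomeo (n : ℕ) : ((SimplexCategory.mk n).toTopObj : Type) ≃ₜ Simp (n+1) where
  toFun f := ⟨fun j => f.down.1 j, f.down.2⟩
  invFun z := ⟨⟨z.1, z.2⟩⟩
  left_inv f := rfl
  right_inv z := rfl
  continuous_toFun := by
    apply Continuous.subtype_mk
    exact continuous_subtype_val.comp continuous_uliftDown
  continuous_invFun :=
    continuous_uliftUp.comp (Continuous.subtype_mk continuous_subtype_val _)

lemma tHomeo_apply (f : (SimplexCategory.mk n).toTopObj) (j : Fin (n+1)) :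
    ((tHomeo n f).1 j : ℝ) = f.down.1 j := rfl

/-- `Coll` for a map into `mk n`, unfolded with modulus `n+1`. -/
lemma coll_iff {m : SimplexCategory} (f : m ⟶ SimplexCategory.mk n) :
    Coll (n+1) a f ↔ a ≤ n+1 ∧ ∃ i : Fin (n+1), ∀ j,
      ((f.toOrderHom j : ℕ) + (n+1) - (i : ℕ)) % (n+1) ≤ n+1-a :=
  Iff.rfl

/-- `InOrbitFace` in terms of `faceT`. -/
lemma inOrbitFace_iff (z : Simp (n+1)) :
    InOrbitFace (n+1) a z ↔ a ≤ n+1 ∧ ∃ i : Fin (n+1), ∀ j ∉ faceT n a i, z.1 j = 0 := by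
  unfold InOrbitFace
  refine and_congr_right fun _ => exists_congr fun i => forall_congr' fun j => ?_
  rw [mem_faceT]
  constructor
  · intro h hj; exact h (by omega)
  · intro h hj; exact h (by omega)

end AUX2

section AUX3
open CategoryTheory.Limits SimplexCategory
variable {n a : ℕ}

lemma inOrbitFace_of_coll {m : SimplexCategory} {g : m ⟶ SimplexCategory.mk n}
    (hg : Coll (n+1) a g) (w : m.toTopObj) :
    InOrbitFace (n+1) a (tHomeo n (SimplexCategory.toTopMap g w)) := by
  classical
  obtain ⟨ha1, i, hi⟩ := hg
  simp only [Nat.add_sub_cancel] at hi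
  rw [inOrbitFace_iff]
  refine ⟨ha1, ⟨(i : ℕ), by omega⟩, fun j hj => ?_⟩
  have hz : (SimplexCategory.toTopMap g w).down.1 j = 0 := by
    rw [SimplexCategory.coe_toTopMap]
    apply Finset.sum_eq_zero
    intro k hk
    exfalso
    have hk2 : g.toOrderHom k = j := (Finset.mem_filter.1 hk).2
    apply hj
    rw [mem_faceT]
    have h2 := hi k
    have h3 : ((j : ℕ) + (n+1) - ((i : ℕ))) % (n+1) ≤ n+1-a := hk2 ▸ h2
    exact h3
  show (SimplexCategory.toTopMap g w).down.1 j = 0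
  rw [hz]

lemma not_coll_id (ha2 : 2 ≤ a) : ¬ Coll (n+1) a (𝟙 (SimplexCategory.mk n)) := by
  rintro ⟨ha1, i, hi⟩
  simp only [Nat.add_sub_cancel] at hi
  have hn : 1 ≤ n := by omega
  have hiv : (i : ℕ) < n + 1 := by have := i.isLt; omega
  have h : ((n + (i : ℕ)) % (n+1) + (n+1) - (i : ℕ)) % (n+1) ≤ n+1-a :=
    hi ⟨(n + (i : ℕ)) % (n+1), Nat.mod_lt _ (Nat.succ_pos n)⟩
  have e1 : (n + (i : ℕ)) % (n+1) + (n+1) - (i : ℕ)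
      = (n + (i : ℕ)) % (n+1) + (n+1 - (i : ℕ)) := by omega
  rw [e1, Nat.mod_add_mod] at h
  have e3 : n + (i : ℕ) + (n+1 - (i : ℕ)) = n + (n+1) := by omega
  rw [e3, Nat.add_mod_right, Nat.mod_eq_of_lt (by omega)] at h
  omega

noncomputable def pt0 : (SimplexCategory.mk 0).toTopObj :=
  ⟨stdSimplex.vertex 0⟩

instance : Subsingleton ((SimplexCategory.mk 0).toTopObj : Type) :=
  inferInstanceAs (Subsingleton (ULift (stdSimplex ℝ (Fin 1))))

lemma exists_lift {z : Simp (n+1)} (ha0 : 0 < a) (hz : InOrbitFace (n+1) a z) :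
    ∃ (g : SimplexCategory.mk (n+1-a) ⟶ SimplexCategory.mk n)
      (w : (SimplexCategory.mk (n+1-a)).toTopObj),
      Coll (n+1) a g ∧ tHomeo n (SimplexCategory.toTopMap g w) = z := by
  classical
  obtain ⟨ha1, i, hi⟩ := (inOrbitFace_iff z).1 hz
  have hcard := card_faceT ha1 ha0 i
  set g0 := (faceT n a i).orderEmbOfFin hcard with hg0
  have hmemT : ∀ k, g0 k ∈ faceT n a i := fun k => (faceT n a i).orderEmbOfFin_mem hcard k
  have himg : Finset.image (fun k => g0 k) Finset.univ = faceT n a i := by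
    ext j
    simp only [Finset.mem_image, Finset.mem_univ, true_and]
    constructor
    · rintro ⟨k, rfl⟩; exact hmemT k
    · intro hj
      have : j ∈ Set.range g0 := by
        rw [hg0, Finset.range_orderEmbOfFin]
        exact hj
      exact this
  have hsum : ∑ k : Fin (n+1-a+1), z.1 (g0 k) = 1 := by
    have h1 : ∑ j ∈ Finset.image (fun k => g0 k) Finset.univ, z.1 j
        = ∑ k : Fin (n+1-a+1), z.1 (g0 k) :=
      Finset.sum_image (by intro x _ y _ h; exact g0.injective h)
    have h2 : ∑ j ∈ faceT n a i, z.1 j = ∑ j : Fin (n+1), z.1 j := by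
      apply Finset.sum_subset (Finset.subset_univ _)
      intro j _ hj
      exact hi j hj
    rw [← h1, himg, h2]
    exact z.2.2
  refine ⟨SimplexCategory.mkHom ⟨fun k => g0 k, g0.monotone⟩,
    ⟨⟨fun k => z.1 (g0 k), ⟨fun k => z.2.1 _, hsum⟩⟩⟩, ⟨ha1, ⟨(i : ℕ), by omega⟩, fun k => ?_⟩, ?_⟩
  · show ((g0 k : ℕ) + (n+1-1+1) - ((i : ℕ))) % (n+1-1+1) ≤ n+1-a
    simp only [Nat.add_sub_cancel]
    have := hmemT k
    rwa [mem_faceT] at this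
  · apply Subtype.ext
    funext j
    show (SimplexCategory.toTopMap (SimplexCategory.mkHom ⟨fun k => g0 k, g0.monotone⟩)
        ⟨⟨fun k => z.1 (g0 k), _⟩⟩).down.1 j = z.1 j
    rw [SimplexCategory.coe_toTopMap, Finset.filter_congr_decidable]
    by_cases hj : j ∈ faceT n a i
    · obtain ⟨k0, hk0⟩ : ∃ k, g0 k = j := by
        rw [← himg] at hj
        simpa using hj
      have hz2 : z.1 j = z.1 (g0 k0) := by
        rw [hk0]
      rw [hz2]
      apply Finset.sum_eq_single_of_mem k0
      · refine Finset.mem_filter.2 ⟨Finset.mem_univ _, ?_⟩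
        exact hk0
      · intro b hb hbne
        exfalso
        apply hbne
        have hb2 : g0 b = j := (Finset.mem_filter.1 hb).2
        exact g0.injective (hb2.trans hk0.symm)
    · rw [Finset.sum_eq_zero (by
        intro k hk
        exfalso
        apply hj
        have hk2 : g0 k = j := (Finset.mem_filter.1 hk).2
        exact hk2 ▸ hmemT k)]
      rw [hi j hj]

end AUX3

section COLIM
open CategoryTheory.Limits SimplexCategory Opposite

variable (n a : ℕ)

/-- The canonical diagram of topological simplices over the category of elements of `Xsa`. -/
noncomputable abbrev Fd : (Xsa (n+1) a).Elementsᵒᵖ ⥤ TopCat :=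
  (CategoryOfElements.π (Xsa (n+1) a)).leftOp ⋙ SimplexCategory.toTop

def qpt : (QuotSimp (n+1) a : Type) :=
  Quotient.mk (collapseSetoid (n+1) a) (Sum.inr PUnit.unit)

def qmk (w : (SimplexCategory.mk n).toTopObj) : (QuotSimp (n+1) a : Type) :=
  Quotient.mk (collapseSetoid (n+1) a) (Sum.inl (tHomeo n w))

lemma qmk_coll {m : SimplexCategory} {g : m ⟶ SimplexCategory.mk n} (hg : Coll (n+1) a g)
    (w : m.toTopObj) : qmk n a (SimplexCategory.toTopMap g w) = qpt n a := by
  apply Quotient.sound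
  refine Or.inr ⟨?_, ?_⟩
  · exact Set.mem_union_left _ ⟨_, inOrbitFace_of_coll hg w, rfl⟩
  · exact Set.mem_union_right _ rfl

noncomputable def legFun {m : SimplexCategoryᵒᵖ} (x : (Xsa (n+1) a).obj m) :
    m.unop.toTopObj → (QuotSimp (n+1) a : Type) :=
  match x with
  | none => fun _ => qpt n a
  | some f => fun w => qmk n a (SimplexCategory.toTopMap f.1 w)

lemma legFun_continuous {m : SimplexCategoryᵒᵖ} (x : (Xsa (n+1) a).obj m) :
    Continuous (legFun n a x) := by
  match x with
  | none => exact continuous_const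
  | some f =>
    show Continuous fun w => qmk n a (SimplexCategory.toTopMap f.1 w)
    unfold qmk
    exact continuous_quot_mk.comp (continuous_inl.comp
      ((tHomeo n).continuous.comp (SimplexCategory.continuous_toTopMap f.1)))

open Classical in
lemma legFun_natural {m m' : SimplexCategory} (f' : m' ⟶ m) (x : (Xsa (n+1) a).obj (op m))
    (w : m'.toTopObj) :
    legFun n a ((Xsa (n+1) a).map f'.op x) w = legFun n a x (SimplexCategory.toTopMap f' w) := by
  match x with
  | none => rfl
  | some f =>
    show legFun n a (if h : Coll (n+1) a (f' ≫ f.1) then none else some ⟨f' ≫ f.1, h⟩) w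
      = qmk n a (SimplexCategory.toTopMap f.1 (SimplexCategory.toTopMap f' w))
    have hcomp : SimplexCategory.toTopMap f.1 (SimplexCategory.toTopMap f' w)
        = SimplexCategory.toTopMap (f' ≫ f.1) w :=
      (SimplexCategory.toTopMap_comp f' f.1 w).symm
    rw [hcomp]
    by_cases h : Coll (n+1) a (f' ≫ f.1)
    · rw [show (if h : Coll (n+1) a (f' ≫ f.1) then none else some ⟨f' ≫ f.1, h⟩ :
          (Xsa (n+1) a).obj (op m')) = none from dif_pos h]
      exact (qmk_coll n a h w).symm
    · rw [show (if h : Coll (n+1) a (f' ≫ f.1) then none else some ⟨f' ≫ f.1, h⟩ :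
          (Xsa (n+1) a).obj (op m')) = some ⟨f' ≫ f.1, h⟩ from dif_neg h]
      rfl

noncomputable def Qcocone : Cocone (Fd n a) where
  pt := QuotSimp (n+1) a
  ι :=
    { app := fun e => TopCat.ofHom (ContinuousMap.mk (legFun n a e.unop.2) (legFun_continuous n a e.unop.2))
      naturality := fun e e' φ => by
        ext w
        show legFun n a e'.unop.2 (SimplexCategory.toTopMap φ.unop.1.unop w)
          = legFun n a e.unop.2 w
        exact (legFun_natural n a φ.unop.1.unop e'.unop.2 w).symm.trans
          (congrFun (congrArg (legFun n a) φ.unop.2) w) }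

lemma E_compat (E : Cocone (Fd n a)) {m m' : SimplexCategory} (f' : m' ⟶ m)
    (x : (Xsa (n+1) a).obj (op m)) (w : m'.toTopObj) :
    E.ι.app (op ((Xsa (n+1) a).elementsMk (op m) x)) (SimplexCategory.toTopMap f' w)
      = E.ι.app (op ((Xsa (n+1) a).elementsMk (op m') ((Xsa (n+1) a).map f'.op x))) w := by
  have h := E.w ((CategoryOfElements.homMk
    ((Xsa (n+1) a).elementsMk (op m) x)
    ((Xsa (n+1) a).elementsMk (op m') ((Xsa (n+1) a).map f'.op x)) f'.op rfl).op)
  conv_rhs => rw [← h]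
  rfl

variable {a} in
noncomputable def xtop (ha2 : 2 ≤ a) : (Xsa (n+1) a).obj (op (SimplexCategory.mk n)) :=
  some ⟨𝟙 (SimplexCategory.mk n), not_coll_id ha2⟩

lemma E_none (E : Cocone (Fd n a)) {m : SimplexCategory} (w : m.toTopObj) :
    E.ι.app (op ((Xsa (n+1) a).elementsMk (op m) none)) w
      = E.ι.app (op ((Xsa (n+1) a).elementsMk (op (SimplexCategory.mk 0)) none)) pt0 := by
  have h := E_compat n a E (SimplexCategory.const m (SimplexCategory.mk 0) 0) none w
  exact h.symm.trans (congrArg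
    (fun v => E.ι.app (op ((Xsa (n+1) a).elementsMk (op (SimplexCategory.mk 0)) none)) v)
    (Subsingleton.elim (α := (SimplexCategory.mk 0).toTopObj) _ _))

open Classical in
lemma Xmap_top (ha2 : 2 ≤ a) {m : SimplexCategory} (f : m ⟶ SimplexCategory.mk n) :
    (Xsa (n+1) a).map f.op (xtop n ha2)
      = (if h : Coll (n+1) a f then none else some ⟨f, h⟩ : (Xsa (n+1) a).obj (op m)) := by
  show (if h : Coll (n+1) a (f ≫ 𝟙 (SimplexCategory.mk n)) then none
      else some ⟨f ≫ 𝟙 (SimplexCategory.mk n), h⟩ : (Xsa (n+1) a).obj (op m)) = _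
  by_cases h : Coll (n+1) a f
  · have h' : Coll (n+1) a (f ≫ 𝟙 (SimplexCategory.mk n)) := by simpa using h
    have e2 : (if h : Coll (n+1) a f then none else some ⟨f, h⟩ : (Xsa (n+1) a).obj (op m))
        = none := dif_pos h
    exact (dif_pos h').trans e2.symm
  · have h' : ¬ Coll (n+1) a (f ≫ 𝟙 (SimplexCategory.mk n)) := by simpa using h
    have e2 : (if h : Coll (n+1) a f then none else some ⟨f, h⟩ : (Xsa (n+1) a).obj (op m))
        = some ⟨f, h⟩ := dif_neg h
    exact (dif_neg h').trans ((congrArg some (Subtype.ext (Category.comp_id f))).trans e2.symm)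

noncomputable def descFun (ha2 : 2 ≤ a) (E : Cocone (Fd n a)) :
    SimpPt (n+1) → (E.pt : Type) :=
  Sum.elim
    (fun z => E.ι.app (op ((Xsa (n+1) a).elementsMk (op (SimplexCategory.mk n)) (xtop n ha2)))
      ((tHomeo n).symm z))
    (fun _ => E.ι.app (op ((Xsa (n+1) a).elementsMk (op (SimplexCategory.mk 0)) none)) pt0)

lemma descFun_collapse (ha2 : 2 ≤ a) (E : Cocone (Fd n a)) {x : SimpPt (n+1)}
    (hx : x ∈ collapseSet (n+1) a) :
    descFun n a ha2 E x = descFun n a ha2 E (Sum.inr PUnit.unit) := by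
  rcases hx with ⟨z, hz, rfl⟩ | hx
  · obtain ⟨g, w, hg, hw⟩ := exists_lift (by omega) hz
    have h1 : (tHomeo n).symm z = SimplexCategory.toTopMap g w := by
      rw [← hw]
      exact (tHomeo n).symm_apply_apply _
    have hnone : (Xsa (n+1) a).map g.op (xtop n ha2)
        = (none : (Xsa (n+1) a).obj (op (SimplexCategory.mk (n+1-a)))) := by
      rw [Xmap_top n a ha2 g]
      exact dif_pos hg
    calc descFun n a ha2 E (Sum.inl z)
        = E.ι.app (op ((Xsa (n+1) a).elementsMk (op (SimplexCategory.mk n)) (xtop n ha2)))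
            ((tHomeo n).symm z) := rfl
      _ = E.ι.app (op ((Xsa (n+1) a).elementsMk (op (SimplexCategory.mk n)) (xtop n ha2)))
            (SimplexCategory.toTopMap g w) := by rw [h1]; exact rfl
      _ = E.ι.app (op ((Xsa (n+1) a).elementsMk (op (SimplexCategory.mk (n+1-a)))
            ((Xsa (n+1) a).map g.op (xtop n ha2)))) w := E_compat n a E g (xtop n ha2) w
      _ = E.ι.app (op ((Xsa (n+1) a).elementsMk (op (SimplexCategory.mk (n+1-a)))
            (none : (Xsa (n+1) a).obj (op (SimplexCategory.mk (n+1-a)))))) w := by rw [hnone]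
      _ = E.ι.app (op ((Xsa (n+1) a).elementsMk (op (SimplexCategory.mk 0))
            (none : (Xsa (n+1) a).obj (op (SimplexCategory.mk 0))))) pt0 := E_none n a E w
      _ = descFun n a ha2 E (Sum.inr PUnit.unit) := rfl
  · rw [show x = Sum.inr PUnit.unit from hx]

noncomputable def descHom (ha2 : 2 ≤ a) (E : Cocone (Fd n a)) :
    (QuotSimp (n+1) a : TopCat) ⟶ E.pt :=
  TopCat.ofHom <| ContinuousMap.mk
    (Quotient.lift (descFun n a ha2 E) (by
      intro x y hxy
      rcases hxy with rfl | ⟨hx, hy⟩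
      · rfl
      · rw [descFun_collapse n a ha2 E hx, descFun_collapse n a ha2 E hy]))
    (by
      apply Continuous.quotient_lift
      apply Continuous.sumElim
      · exact (E.ι.app _).hom.continuous.comp (tHomeo n).symm.continuous
      · exact continuous_const)

lemma fac_lemma (ha2 : 2 ≤ a) (E : Cocone (Fd n a)) (e : (Xsa (n+1) a).Elementsᵒᵖ)
    (w : (Fd n a).obj e) :
    descHom n a ha2 E ((Qcocone n a).ι.app e w) = E.ι.app e w := by
  obtain ⟨⟨mop, x⟩⟩ := e
  match x with
  | none =>
    exact (E_none n a E w).symm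
  | some f =>
    have hsome : (Xsa (n+1) a).map f.1.op (xtop n ha2)
        = (some f : (Xsa (n+1) a).obj (op mop.unop)) := by
      rw [Xmap_top n a ha2 f.1]
      exact dif_neg f.2
    have h0 : (tHomeo n).symm (tHomeo n (SimplexCategory.toTopMap f.1 w))
        = SimplexCategory.toTopMap f.1 w := (tHomeo n).symm_apply_apply _
    calc descHom n a ha2 E ((Qcocone n a).ι.app (op ⟨mop, some f⟩) w)
        = E.ι.app (op ((Xsa (n+1) a).elementsMk (op (SimplexCategory.mk n)) (xtop n ha2)))
            ((tHomeo n).symm (tHomeo n (SimplexCategory.toTopMap f.1 w))) := rfl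
      _ = E.ι.app (op ((Xsa (n+1) a).elementsMk (op (SimplexCategory.mk n)) (xtop n ha2)))
            (SimplexCategory.toTopMap f.1 w) := by rw [h0]; exact rfl
      _ = E.ι.app (op ((Xsa (n+1) a).elementsMk (op mop.unop)
            ((Xsa (n+1) a).map f.1.op (xtop n ha2)))) w := E_compat n a E f.1 (xtop n ha2) w
      _ = E.ι.app (op ((Xsa (n+1) a).elementsMk (op mop.unop)
            (some f : (Xsa (n+1) a).obj (op mop.unop)))) w := by rw [hsome]

noncomputable def Qcolimit (ha2 : 2 ≤ a) : IsColimit (Qcocone n a) where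
  desc := descHom n a ha2
  fac E e := by
    ext w
    exact fac_lemma n a ha2 E e w
  uniq E f hf := by
    ext x
    induction x using Quotient.ind with
    | _ y =>
      match y with
      | Sum.inl z =>
        have hx : (Quotient.mk (collapseSetoid (n+1) a) (Sum.inl z) : (QuotSimp (n+1) a : Type))
            = (Qcocone n a).ι.app
                (op ((Xsa (n+1) a).elementsMk (op (SimplexCategory.mk n)) (xtop n ha2)))
                ((tHomeo n).symm z) := by
          show _ = qmk n a (SimplexCategory.toTopMap (𝟙 (SimplexCategory.mk n)) ((tHomeo n).symm z))
          rw [show SimplexCategory.toTopMap (𝟙 (SimplexCategory.mk n)) ((tHomeo n).symm z)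
              = (tHomeo n).symm z from
            SimplexCategory.toTopMap_id _ _]
          unfold qmk
          rw [(tHomeo n).apply_symm_apply]
        have h3 := ConcreteCategory.congr_hom
          (hf (op ((Xsa (n+1) a).elementsMk (op (SimplexCategory.mk n)) (xtop n ha2))))
          ((tHomeo n).symm z)
        rw [hx]
        exact h3.trans (fac_lemma n a ha2 E _ _).symm
      | Sum.inr p =>
        have h3 := ConcreteCategory.congr_hom
          (hf (op ((Xsa (n+1) a).elementsMk (op (SimplexCategory.mk 0)) none))) pt0
        show f ((Qcocone n a).ι.app (op ((Xsa (n+1) a).elementsMk (op (SimplexCategory.mk 0)) none))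
            pt0) = descHom n a ha2 E ((Qcocone n a).ι.app
              (op ((Xsa (n+1) a).elementsMk (op (SimplexCategory.mk 0)) none)) pt0)
        exact h3.trans (fac_lemma n a ha2 E _ _).symm

end COLIM

/-- the geometric realization of the pointed simplicial set
`X_{s,a}` is homeomorphic to `Δ^{s-1}/(C_s · Δ^{s-a})` (the topological
quotient of the standard simplex collapsing the union of the cyclic translates
of the face `Δ^{s-a}`, with an added basepoint). -/
theorem stmt14 (s a : ℕ) (hs : 0 < s) (ha : 2 ≤ a) :
    Nonempty (SSet.toTop.obj (Xsa s a) ≃ₜ QuotSimp s a) := by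
  obtain ⟨n, rfl⟩ : ∃ n, s = n + 1 := ⟨s - 1, (Nat.succ_pred_eq_of_pos hs).symm⟩
  haveI := sSetTopAdj.leftAdjoint_preservesColimits
  have h1 : Limits.IsColimit
      (SSet.toTop.mapCocone (Presheaf.coconeOfRepresentable (Xsa (n+1) a))) :=
    Limits.isColimitOfPreserves SSet.toTop (Presheaf.colimitOfRepresentable (Xsa (n+1) a))
  let eIso : Presheaf.functorToRepresentables (Xsa (n+1) a) ⋙ SSet.toTop ≅ Fd n a :=
    Functor.isoWhiskerLeft (CategoryOfElements.π (Xsa (n+1) a)).leftOp SSet.toTopSimplex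
  have h2 : Limits.IsColimit ((Limits.Cocone.precompose eIso.hom).obj (Qcocone n a)) :=
    (Limits.IsColimit.precomposeHomEquiv eIso (Qcocone n a)).symm (Qcolimit n a ha)
  exact ⟨TopCat.homeoOfIso (h1.coconePointUniqueUpToIso h2)⟩
end
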